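/- arXiv:math/0610929 — 6 statements merged into one kernel-verified Lean document; each statement's English description precedes it below -/
import Mathlib

section
/- Let G be the group of a Wirtinger presentation on n generators with s relators, given by maps a, b : Fin s → Fin n and words w : Fin s → FreeGroup (Fin n). For any indices i, j : Fin n, the images in G of the generators x_i and x_j are conjugate elements of G if and only if i and j lie in the same equivalence class of the equivalence relation on Fin n generated by the pairs (a q, b q) for q : Fin s (equivalently, in the same connected component of the associated graph Γ). -/
/-- The relator set of a Wirtinger presentation on `n` generators with `s` relators. -/
def wirtingerRels (n s : ℕ) (a b : Fin s → Fin n) (w : Fin s → FreeGroup (Fin n)) :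
    Set (FreeGroup (Fin n)) :=
  { r | ∃ q : Fin s,
      r = (FreeGroup.of (a q))⁻¹ * (w q)⁻¹ * FreeGroup.of (b q) * w q }

/-- The edge relation of the graph Γ associated to a Wirtinger presentation:
`i` and `j` are joined by an edge iff some relator `q` has `a q = i` and `b q = j`. -/
def wirtingerEdge (n s : ℕ) (a b : Fin s → Fin n) (i j : Fin n) : Prop :=
  ∃ q : Fin s, a q = i ∧ b q = j

theorem generators_isConj_iff_sameComponent
    (n s : ℕ) (a b : Fin s → Fin n) (w : Fin s → FreeGroup (Fin n)) (i j : Fin n) :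
    IsConj (PresentedGroup.of (rels := wirtingerRels n s a b w) i)
        (PresentedGroup.of (rels := wirtingerRels n s a b w) j) ↔
      Relation.EqvGen (wirtingerEdge n s a b) i j := by
  constructor
  · -- conjugate ⇒ same component, via abelian invariant
    intro hconj
    set st : Setoid (Fin n) :=
      ⟨Relation.EqvGen (wirtingerEdge n s a b),
        Relation.EqvGen.is_equivalence _⟩ with hst
    let f : Fin n → Multiplicative (Quotient st →₀ ℤ) :=
      fun k => Multiplicative.ofAdd (Finsupp.single (Quotient.mk st k) 1)
    have hrel : ∀ r ∈ wirtingerRels n s a b w, FreeGroup.lift f r = 1 := by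
      rintro r ⟨q, rfl⟩
      have hq : (Quotient.mk st (a q)) = Quotient.mk st (b q) :=
        Quotient.sound (Relation.EqvGen.rel _ _ ⟨q, rfl, rfl⟩)
      simp only [map_mul, map_inv, FreeGroup.lift_apply_of, f, hq]
      simp [mul_assoc, mul_comm, mul_left_comm]
    let φ := PresentedGroup.toGroup hrel
    have h2 : IsConj (f i) (f j) := by
      have := φ.map_isConj hconj
      rwa [PresentedGroup.toGroup.of, PresentedGroup.toGroup.of] at this
    have h3 : f i = f j := by
      rcases isConj_iff.mp h2 with ⟨c, hc⟩
      rw [← hc, mul_right_comm, mul_inv_cancel, one_mul]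
    have h4 : (Quotient.mk st i) = Quotient.mk st j := by
      have := congrArg Multiplicative.toAdd h3
      simpa [f, Finsupp.single_eq_single_iff] using this
    exact Quotient.exact h4
  · -- same component ⇒ conjugate
    intro h
    induction h with
    | rel x y hxy =>
        rcases hxy with ⟨q, rfl, rfl⟩
        have hmem : (FreeGroup.of (a q))⁻¹ * (w q)⁻¹ * FreeGroup.of (b q) * w q ∈
            Subgroup.normalClosure (wirtingerRels n s a b w) :=
          Subgroup.subset_normalClosure ⟨q, rfl⟩
        have h1 : (QuotientGroup.mk ((FreeGroup.of (a q))⁻¹ * (w q)⁻¹ *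
            FreeGroup.of (b q) * w q) :
            PresentedGroup (wirtingerRels n s a b w)) = 1 :=
          (QuotientGroup.eq_one_iff _).mpr hmem
        rw [isConj_comm, isConj_iff]
        refine ⟨(QuotientGroup.mk (w q))⁻¹, ?_⟩
        have : (PresentedGroup.of (rels := wirtingerRels n s a b w) (a q))⁻¹ *
            (QuotientGroup.mk (w q))⁻¹ *
            PresentedGroup.of (rels := wirtingerRels n s a b w) (b q) *
            QuotientGroup.mk (w q) = 1 := by
          exact h1
        calc (QuotientGroup.mk (w q))⁻¹ *
              PresentedGroup.of (rels := wirtingerRels n s a b w) (b q) *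
              ((QuotientGroup.mk (w q))⁻¹)⁻¹
            = PresentedGroup.of (rels := wirtingerRels n s a b w) (a q) *
              ((PresentedGroup.of (rels := wirtingerRels n s a b w) (a q))⁻¹ *
              (QuotientGroup.mk (w q))⁻¹ *
              PresentedGroup.of (rels := wirtingerRels n s a b w) (b q) *
              QuotientGroup.mk (w q)) := by
                exact (by intro A W B; group : ∀ A W B : PresentedGroup (wirtingerRels n s a b w),
                  W⁻¹ * B * W⁻¹⁻¹ = A * (A⁻¹ * W⁻¹ * B * W)) _ _ _
          _ = _ := by rw [this]; exact mul_one _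
    | refl x => exact IsConj.refl _
    | symm x y _ ih => exact ih.symm
    | trans x y z _ _ ih1 ih2 => exact ih1.trans ih2
end

section
/- Let G be the group of a Wirtinger presentation on n generators with s relators, given by maps a, b : Fin s → Fin n and words w : Fin s → FreeGroup (Fin n). Then the abelianization of G is isomorphic to the free abelian group on the quotient of Fin n by the equivalence relation generated by the pairs (a q, b q). In particular, if this equivalence relation has exactly k classes, then the abelianization of G is isomorphic to ℤ^k. -/
section Aux

variable (n s : ℕ) (a b : Fin s → Fin n) (w : Fin s → FreeGroup (Fin n))

local notation "Q" => Quot (wirtingerEdge n s a b)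
local notation "G" => PresentedGroup (wirtingerRels n s a b w)
local notation "M" => Multiplicative (FreeAbelianGroup (Quot (wirtingerEdge n s a b)))

def fgen : Fin n → M := fun i => Multiplicative.ofAdd (FreeAbelianGroup.of (Quot.mk _ i))

lemma fgen_rel : ∀ r ∈ wirtingerRels n s a b w,
    FreeGroup.lift (fgen n s a b) r = 1 := by
  rintro r ⟨q, rfl⟩
  simp only [map_mul, map_inv, FreeGroup.lift_apply_of]
  have h : fgen n s a b (a q) = fgen n s a b (b q) := by
    unfold fgen
    rw [Quot.sound ⟨q, rfl, rfl⟩]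
  rw [h, mul_assoc, mul_assoc, mul_comm (fgen n s a b (b q)),
    ← mul_assoc]
  group

end Aux

section Aux2

variable (n s : ℕ) (a b : Fin s → Fin n) (w : Fin s → FreeGroup (Fin n))

noncomputable def phi : Abelianization (PresentedGroup (wirtingerRels n s a b w)) →*
    Multiplicative (FreeAbelianGroup (Quot (wirtingerEdge n s a b))) :=
  Abelianization.lift (PresentedGroup.toGroup (fgen_rel n s a b w))

lemma gen_eq (i j : Fin n) (h : wirtingerEdge n s a b i j) :
    Abelianization.of (PresentedGroup.of (rels := wirtingerRels n s a b w) i) =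
      Abelianization.of (PresentedGroup.of j) := by
  obtain ⟨q, rfl, rfl⟩ := h
  have hrel : (PresentedGroup.of (rels := wirtingerRels n s a b w) (a q))⁻¹ *
      ((PresentedGroup.mk _ (w q))⁻¹ * (PresentedGroup.of (b q) * PresentedGroup.mk _ (w q))) = 1 := by
    have : ((FreeGroup.of (a q))⁻¹ * (w q)⁻¹ * FreeGroup.of (b q) * w q) ∈
        Subgroup.normalClosure (wirtingerRels n s a b w) :=
      Subgroup.subset_normalClosure ⟨q, rfl⟩
    have h1 : (QuotientGroup.mk ((FreeGroup.of (a q))⁻¹ * (w q)⁻¹ * FreeGroup.of (b q) * w q) :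
        PresentedGroup (wirtingerRels n s a b w)) = 1 := (QuotientGroup.eq_one_iff _).mpr this
    have h2 : PresentedGroup.mk _ ((FreeGroup.of (a q))⁻¹ * (w q)⁻¹ * FreeGroup.of (b q) * w q) = 1 := h1
    simpa only [map_mul, map_inv, mul_assoc, PresentedGroup.of] using h2
  have := congrArg Abelianization.of hrel
  simp only [map_mul, map_inv, map_one] at this
  set x := Abelianization.of (PresentedGroup.of (rels := wirtingerRels n s a b w) (a q))
  set y := Abelianization.of (PresentedGroup.of (rels := wirtingerRels n s a b w) (b q))
  set u := Abelianization.of (PresentedGroup.mk (wirtingerRels n s a b w) (w q))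
  have h2 : x⁻¹ * (u⁻¹ * (y * u)) = 1 := this
  rw [mul_comm y u, inv_mul_cancel_left, inv_mul_eq_one] at h2
  exact h2

noncomputable def psi : FreeAbelianGroup (Quot (wirtingerEdge n s a b)) →+
    Additive (Abelianization (PresentedGroup (wirtingerRels n s a b w))) :=
  FreeAbelianGroup.lift (Quot.lift
    (fun i => Additive.ofMul (Abelianization.of (PresentedGroup.of i)))
    (fun i j h => congrArg Additive.ofMul (gen_eq n s a b w i j h)))

noncomputable def mainEquiv : Abelianization (PresentedGroup (wirtingerRels n s a b w)) ≃*
    Multiplicative (FreeAbelianGroup (Quot (wirtingerEdge n s a b))) := by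
  refine MonoidHom.toMulEquiv (phi n s a b w)
    (AddMonoidHom.toMultiplicativeLeft (psi n s a b w)) ?_ ?_
  · apply Abelianization.hom_ext
    apply PresentedGroup.ext
    intro x
    simp [phi, psi, fgen, PresentedGroup.toGroup.of]
  · have key : ∀ z : FreeAbelianGroup (Quot (wirtingerEdge n s a b)),
        (phi n s a b w) ((AddMonoidHom.toMultiplicativeLeft (psi n s a b w))
          (Multiplicative.ofAdd z)) = Multiplicative.ofAdd z := by
      intro z
      have h1 : (MonoidHom.toAdditiveLeft ((phi n s a b w).comp
          (AddMonoidHom.toMultiplicativeLeft (psi n s a b w)))) = AddMonoidHom.id _ := by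
        apply FreeAbelianGroup.lift_ext
        intro x
        induction x using Quot.ind with
        | _ i =>
          simp [phi, psi, fgen, PresentedGroup.toGroup.of]
          rfl
      exact congrArg Multiplicative.ofAdd (congrFun (congrArg (↑·) h1) z)
    refine MonoidHom.ext fun z => ?_
    exact key z.toAdd

end Aux2

theorem abelianization_of_wirtinger_group
    (n s : ℕ) (a b : Fin s → Fin n) (w : Fin s → FreeGroup (Fin n)) :
    Nonempty (Abelianization (PresentedGroup (wirtingerRels n s a b w)) ≃*
        Multiplicative (FreeAbelianGroup (Quot (wirtingerEdge n s a b)))) ∧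
      ∀ k : ℕ, Nat.card (Quot (wirtingerEdge n s a b)) = k →
        Nonempty (Abelianization (PresentedGroup (wirtingerRels n s a b w)) ≃*
          Multiplicative (Fin k → ℤ)) := by
  constructor
  · exact ⟨mainEquiv n s a b w⟩
  · intro k hk
    have : Finite (Quot (wirtingerEdge n s a b)) := Quot.finite _
    exact ⟨(mainEquiv n s a b w).trans (AddEquiv.toMultiplicative
      (((FreeAbelianGroup.equivFinsupp _).trans
        (Finsupp.domCongr (Finite.equivFinOfCardEq hk))).trans
        Finsupp.addEquivFunOnFinite))⟩
end

section
/- Let G be the group of a Wirtinger presentation on n generators with s relators, given by maps a, b : Fin s → Fin n and words w : Fin s → FreeGroup (Fin n). If T is a subset of Fin n containing at least one index from each equivalence class of the equivalence relation generated by the pairs (a q, b q), then the normal closure in G of the set of images of the generators {x_t : t ∈ T} is all of G. In particular, if there are exactly k equivalence classes, then G is normally generated by k elements. -/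
lemma Relation.EqvGen.isConj {α G : Type*} [Group G] {r : α → α → Prop} {f : α → G}
    (hr : ∀ i j, r i j → IsConj (f i) (f j)) {i j : α} (h : Relation.EqvGen r i j) :
    IsConj (f i) (f j) := by
  induction h with
  | rel i j hij => exact hr i j hij
  | refl i => exact IsConj.refl _
  | symm _ _ _ ih => exact ih.symm
  | trans _ _ _ _ _ ih₁ ih₂ => exact ih₁.trans ih₂

lemma Subgroup.normalClosure_image_eq_top_of_eqvGen {α G : Type*} [Group G] {f : α → G}
    (hf : Subgroup.closure (Set.range f) = ⊤) {r : α → α → Prop}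
    (hr : ∀ i j, r i j → IsConj (f i) (f j)) {T : Set α}
    (hT : ∀ i, ∃ t ∈ T, Relation.EqvGen r t i) :
    Subgroup.normalClosure (f '' T) = ⊤ := by
  rw [eq_top_iff, ← hf, Subgroup.closure_le]
  rintro _ ⟨i, rfl⟩
  obtain ⟨t, ht, hti⟩ := hT i
  exact Subgroup.conjugatesOfSet_subset_normalClosure
    (Group.mem_conjugatesOfSet_iff.mpr ⟨f t, Set.mem_image_of_mem f ht, hti.isConj hr⟩)

lemma Relation.exists_fin_eqvGen_representatives {α : Type*} [Finite α] (r : α → α → Prop)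
    {k : ℕ} (hk : Nat.card (Quot r) = k) :
    ∃ f : Fin k → α, ∀ i, ∃ t ∈ Set.range f, Relation.EqvGen r t i := by
  subst hk
  let e := Finite.equivFin (Quot r)
  refine ⟨fun j => (e.symm j).out, fun i => ⟨_, ⟨e (Quot.mk r i), rfl⟩, Quot.eq.mp ?_⟩⟩
  dsimp only
  rw [Equiv.symm_apply_apply, Quot.out_eq]

lemma PresentedGroup.isConj_mk_of_mem {α : Type*} {rels : Set (FreeGroup α)}
    {x y u : FreeGroup α} (h : x⁻¹ * u⁻¹ * y * u ∈ rels) :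
    IsConj (PresentedGroup.mk rels x) (PresentedGroup.mk rels y) := by
  have h₁ := PresentedGroup.one_of_mem h
  simp only [map_mul, map_inv] at h₁
  refine isConj_iff.mpr ⟨PresentedGroup.mk rels u, ?_⟩
  set X := PresentedGroup.mk rels x
  set Y := PresentedGroup.mk rels y
  set U := PresentedGroup.mk rels u
  calc U * X * U⁻¹ = U * X * (X⁻¹ * U⁻¹ * Y * U) * U⁻¹ := by rw [h₁, mul_one]
    _ = Y := by group

lemma wirtingerEdge.isConj {n s : ℕ} {a b : Fin s → Fin n} {w : Fin s → FreeGroup (Fin n)}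
    {i j : Fin n} (h : wirtingerEdge n s a b i j) :
    IsConj (PresentedGroup.of (rels := wirtingerRels n s a b w) i) (PresentedGroup.of j) := by
  obtain ⟨q, rfl, rfl⟩ := h
  exact PresentedGroup.isConj_mk_of_mem ⟨q, rfl⟩

theorem wirtinger_group_normally_generated
    (n s : ℕ) (a b : Fin s → Fin n) (w : Fin s → FreeGroup (Fin n)) :
    (∀ T : Set (Fin n),
      (∀ i : Fin n, ∃ t ∈ T, Relation.EqvGen (wirtingerEdge n s a b) t i) →
      Subgroup.normalClosure
        (PresentedGroup.of (rels := wirtingerRels n s a b w) '' T) = ⊤) ∧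
    ∀ k : ℕ, Nat.card (Quot (wirtingerEdge n s a b)) = k →
      ∃ f : Fin k → Fin n,
        Subgroup.normalClosure
          (Set.range fun q => PresentedGroup.of (rels := wirtingerRels n s a b w) (f q)) = ⊤ := by
  have normalClosure_eq_top (T : Set (Fin n))
      (hT : ∀ i, ∃ t ∈ T, Relation.EqvGen (wirtingerEdge n s a b) t i) :=
    Subgroup.normalClosure_image_eq_top_of_eqvGen
      (PresentedGroup.closure_range_of (wirtingerRels n s a b w)) (fun _ _ h => h.isConj) hT
  refine ⟨normalClosure_eq_top, fun k hk => ?_⟩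
  obtain ⟨f, hf⟩ := Relation.exists_fin_eqvGen_representatives _ hk
  exact ⟨f, by rw [Set.range_comp']; exact normalClosure_eq_top _ hf⟩
end

section
/- Let G be the group of a Wirtinger presentation on n generators with s relators, given by maps a, b : Fin s → Fin n and words w : Fin s → FreeGroup (Fin n), and suppose that every connected component of the associated graph Γ has Euler characteristic 0 or 1 (equivalently, for every equivalence class C of the equivalence relation generated by the pairs (a q, b q), the number of relators q with a q ∈ C is at most the cardinality of C). Then there exist a natural number m, a permutation σ of Fin m, and words w' : Fin m → FreeGroup (Fin m) such that G is isomorphic to the presented group with generators x_i (i : Fin m) and the m relators (FreeGroup.of (σ q))⁻¹ * (w' q)⁻¹ * (FreeGroup.of q) * (w' q) for q : Fin m, i.e. a Wirtinger presentation with equally many generators and relators in which relator q says that the generator indexed q is conjugate to the generator indexed σ q. -/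
/-- The relator set of a cyclic Wirtinger presentation: `m` generators, `m` relators,
relator `q` saying that generator `q` is conjugate (by the word `w' q`) to generator `σ q`. -/
def cyclicWirtingerRels (m : ℕ) (σ : Equiv.Perm (Fin m)) (w' : Fin m → FreeGroup (Fin m)) :
    Set (FreeGroup (Fin m)) :=
  { r | ∃ q : Fin m,
      r = (FreeGroup.of (σ q))⁻¹ * (w' q)⁻¹ * FreeGroup.of q * w' q }



set_option maxHeartbeats 1000000
namespace WirtingerAux

open Relation

variable {n : ℕ}



variable {n : ℕ}

abbrev NC (S : Set (FreeGroup (Fin n))) : Subgroup (FreeGroup (Fin n)) :=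
  Subgroup.normalClosure S

/-- relator asserting `x_j = u⁻¹ x_i u` -/
def cj (i j : Fin n) (u : FreeGroup (Fin n)) : FreeGroup (Fin n) :=
  (FreeGroup.of j)⁻¹ * u⁻¹ * FreeGroup.of i * u

lemma cj_self (i : Fin n) : cj i i 1 = 1 := by
  simp [cj]

lemma conj_mem' {S : Set (FreeGroup (Fin n))} {x : FreeGroup (Fin n)}
    (h : x ∈ NC S) (g : FreeGroup (Fin n)) : g * x * g⁻¹ ∈ NC S :=
  Subgroup.Normal.conj_mem Subgroup.normalClosure_normal x h g

lemma ncl_flip {S : Set (FreeGroup (Fin n))} {i j : Fin n} {u : FreeGroup (Fin n)}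
    (h : cj i j u ∈ NC S) : cj j i u⁻¹ ∈ NC S := by
  have e : cj j i u⁻¹ = u * (cj i j u)⁻¹ * u⁻¹ := by
    unfold cj; group
  rw [e]
  exact conj_mem' (inv_mem h) u

lemma ncl_trans {S : Set (FreeGroup (Fin n))} {i j k : Fin n} {u v : FreeGroup (Fin n)}
    (h1 : cj i j u ∈ NC S) (h2 : cj j k v ∈ NC S) : cj i k (u * v) ∈ NC S := by
  have e : cj i k (u * v) = cj j k v * (v⁻¹ * cj i j u * v) := by
    unfold cj; group
  rw [e]
  have := conj_mem' h1 v⁻¹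
  rw [inv_inv] at this
  exact mul_mem h2 this

lemma ncl_eq_of {X Y : Set (FreeGroup (Fin n))} (h1 : X ⊆ ↑(NC Y)) (h2 : Y ⊆ ↑(NC X)) :
    NC X = NC Y :=
  le_antisymm (Subgroup.normalClosure_le_normal h1) (Subgroup.normalClosure_le_normal h2)

lemma ncl_mono {X Y : Set (FreeGroup (Fin n))} (h : X ⊆ Y) : NC X ≤ NC Y :=
  Subgroup.normalClosure_mono h

lemma ncl_union_congr {X Y Z : Set (FreeGroup (Fin n))} (h : NC X = NC Y) :
    NC (X ∪ Z) = NC (Y ∪ Z) := by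
  apply ncl_eq_of
  · rintro r (hr | hr)
    · have h1 : r ∈ NC X := Subgroup.subset_normalClosure hr
      rw [h] at h1
      exact ncl_mono Set.subset_union_left h1
    · exact ncl_mono Set.subset_union_right (Subgroup.subset_normalClosure hr)
  · rintro r (hr | hr)
    · have h1 : r ∈ NC Y := Subgroup.subset_normalClosure hr
      rw [← h] at h1
      exact ncl_mono Set.subset_union_left h1
    · exact ncl_mono Set.subset_union_right (Subgroup.subset_normalClosure hr)




open Relation

variable {α : Type*}

lemma eqvgen_ext {r : α → α → Prop} {A B : α} {x y : α}
    (h : EqvGen (fun u v => r u v ∨ (u = A ∧ v = B)) x y) :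
    EqvGen r x y ∨ (EqvGen r x A ∧ EqvGen r B y) ∨ (EqvGen r x B ∧ EqvGen r A y) := by
  induction h with
  | rel u v huv =>
    rcases huv with huv | ⟨rfl, rfl⟩
    · exact Or.inl (EqvGen.rel _ _ huv)
    · exact Or.inr (Or.inl ⟨EqvGen.refl _, EqvGen.refl _⟩)
  | refl u => exact Or.inl (EqvGen.refl _)
  | symm u v _ ih =>
    rcases ih with h1 | ⟨h1, h2⟩ | ⟨h1, h2⟩
    · exact Or.inl h1.symm
    · exact Or.inr (Or.inr ⟨h2.symm, h1.symm⟩)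
    · exact Or.inr (Or.inl ⟨h2.symm, h1.symm⟩)
  | trans u v z _ _ ih1 ih2 =>
    rcases ih1 with h1 | ⟨h1, h2⟩ | ⟨h1, h2⟩ <;>
      rcases ih2 with h3 | ⟨h3, h4⟩ | ⟨h3, h4⟩
    · exact Or.inl (h1.trans _ _ _ h3)
    · exact Or.inr (Or.inl ⟨h1.trans _ _ _ h3, h4⟩)
    · exact Or.inr (Or.inr ⟨h1.trans _ _ _ h3, h4⟩)
    · exact Or.inr (Or.inl ⟨h1, h2.trans _ _ _ h3⟩)
    · exact Or.inr (Or.inl ⟨h1, h4⟩)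
    · exact Or.inl (h1.trans _ _ _ h4)
    · exact Or.inr (Or.inr ⟨h1, h2.trans _ _ _ h3⟩)
    · exact Or.inl (h1.trans _ _ _ h4)
    · exact Or.inr (Or.inr ⟨h1, h4⟩)

lemma eqvgen_ext_rev {r : α → α → Prop} {A B : α} {x y : α}
    (h : EqvGen r x y ∨ (EqvGen r x A ∧ EqvGen r B y) ∨ (EqvGen r x B ∧ EqvGen r A y)) :
    EqvGen (fun u v => r u v ∨ (u = A ∧ v = B)) x y := by
  have mono : ∀ u v, EqvGen r u v → EqvGen (fun u v => r u v ∨ (u = A ∧ v = B)) u v := by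
    intro u v huv
    exact Relation.EqvGen.mono (fun u v h => Or.inl h) _ _ huv
  have hAB : EqvGen (fun u v => r u v ∨ (u = A ∧ v = B)) A B :=
    EqvGen.rel _ _ (Or.inr ⟨rfl, rfl⟩)
  rcases h with h1 | ⟨h1, h2⟩ | ⟨h1, h2⟩
  · exact mono _ _ h1
  · exact ((mono _ _ h1).trans _ _ _ hAB).trans _ _ _ (mono _ _ h2)
  · exact ((mono _ _ h1).trans _ _ _ hAB.symm).trans _ _ _ (mono _ _ h2)

lemma eqvgen_ext_iff {r : α → α → Prop} {A B : α} {x y : α} :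
    EqvGen (fun u v => r u v ∨ (u = A ∧ v = B)) x y ↔
      (EqvGen r x y ∨ (EqvGen r x A ∧ EqvGen r B y) ∨ (EqvGen r x B ∧ EqvGen r A y)) :=
  ⟨eqvgen_ext, eqvgen_ext_rev⟩

/-- if A, B were already equivalent, adding the edge changes nothing -/
lemma eqvgen_ext_of_equiv {r : α → α → Prop} {A B : α} (hAB : EqvGen r A B) {x y : α} :
    EqvGen (fun u v => r u v ∨ (u = A ∧ v = B)) x y ↔ EqvGen r x y := by
  rw [eqvgen_ext_iff]
  constructor
  · rintro (h | ⟨h1, h2⟩ | ⟨h1, h2⟩)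
    · exact h
    · exact (h1.trans _ _ _ hAB).trans _ _ _ h2
    · exact (h1.trans _ _ _ hAB.symm).trans _ _ _ h2
  · exact Or.inl

lemma eqvgen_swap_pair {r : α → α → Prop} {A B : α} {x y : α} :
    EqvGen (fun u v => r u v ∨ (u = A ∧ v = B)) x y ↔
      EqvGen (fun u v => r u v ∨ (u = B ∧ v = A)) x y := by
  rw [eqvgen_ext_iff, eqvgen_ext_iff]
  tauto

lemma eqvgen_bot {x y : α} (h : EqvGen (fun _ _ => False) x y) : x = y := by
  induction h with
  | rel _ _ h => exact h.elim
  | refl _ => rfl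
  | symm _ _ _ ih => exact ih.symm
  | trans _ _ _ _ _ ih1 ih2 => exact ih1.trans ih2


def cycSet (σ : Equiv.Perm (Fin n)) (w' : Fin n → FreeGroup (Fin n)) :
    Set (FreeGroup (Fin n)) :=
  { r | ∃ q : Fin n, r = cj q (σ q) (w' q) }

def Reach (σ : Equiv.Perm (Fin n)) (x y : Fin n) : Prop := ∃ k : ℕ, (σ ^ k) x = y

lemma Reach.refl (σ : Equiv.Perm (Fin n)) (x : Fin n) : Reach σ x x := ⟨0, rfl⟩

lemma Reach.step (σ : Equiv.Perm (Fin n)) (x : Fin n) : Reach σ x (σ x) := ⟨1, by simp⟩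

lemma Reach.trans {σ : Equiv.Perm (Fin n)} {x y z : Fin n}
    (h1 : Reach σ x y) (h2 : Reach σ y z) : Reach σ x z := by
  obtain ⟨k, rfl⟩ := h1
  obtain ⟨m, rfl⟩ := h2
  exact ⟨m + k, by rw [pow_add]; rfl⟩

lemma Reach.symm {σ : Equiv.Perm (Fin n)} {x y : Fin n} (h : Reach σ x y) : Reach σ y x := by
  obtain ⟨k, rfl⟩ := h
  refine ⟨orderOf σ * k - k, ?_⟩
  have hk : k ≤ orderOf σ * k := Nat.le_mul_of_pos_left k (orderOf_pos σ)
  have : (σ ^ (orderOf σ * k - k)) ((σ ^ k) x) = (σ ^ (orderOf σ * k)) x := by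
    rw [← Equiv.Perm.mul_apply, ← pow_add, Nat.sub_add_cancel hk]
  rw [this, pow_mul, pow_orderOf_eq_one, one_pow]
  rfl

/-- predecessor is reachable -/
lemma reach_inv (σ : Equiv.Perm (Fin n)) (x : Fin n) : Reach σ x (σ⁻¹ x) := by
  have h := (Reach.step σ (σ⁻¹ x)).symm
  rwa [show σ (σ⁻¹ x) = x from Equiv.apply_symm_apply σ x] at h

lemma pow_succ_apply (σ : Equiv.Perm (Fin n)) (k : ℕ) (x : Fin n) :
    (σ ^ (k + 1)) x = σ ((σ ^ k) x) := by
  rw [pow_succ']; rfl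

lemma walk {σ : Equiv.Perm (Fin n)} {w' g : Fin n → FreeGroup (Fin n)} {x : Fin n} (k : ℕ)
    (hpot : ∀ j < k, w' ((σ ^ j) x) = (g ((σ ^ j) x))⁻¹ * g ((σ ^ (j + 1)) x)) :
    cj x ((σ ^ k) x) ((g x)⁻¹ * g ((σ ^ k) x)) ∈ NC (cycSet σ w') := by
  induction k with
  | zero =>
    have : cj x ((σ ^ 0) x) ((g x)⁻¹ * g ((σ ^ 0) x)) = 1 := by
      simp [cj]
    rw [this]; exact one_mem _
  | succ k ih =>
    have h1 := ih (fun j hj => hpot j (Nat.lt_succ_of_lt hj))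
    have h2 : cj ((σ ^ k) x) ((σ ^ (k + 1)) x) (w' ((σ ^ k) x)) ∈ NC (cycSet σ w') := by
      apply Subgroup.subset_normalClosure
      exact ⟨(σ ^ k) x, by rw [pow_succ_apply]⟩
    rw [hpot k (Nat.lt_succ_self k)] at h2
    have h3 :
        cj x ((σ ^ (k + 1)) x)
          (((g x)⁻¹ * g ((σ ^ k) x)) * ((g ((σ ^ k) x))⁻¹ * g ((σ ^ (k + 1)) x))) ∈
          NC (cycSet σ w') := by
      have e : cj x ((σ ^ (k+1)) x) (((g x)⁻¹ * g ((σ ^ k) x)) * ((g ((σ ^ k) x))⁻¹ * g ((σ ^ (k+1)) x)))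
          = cj ((σ ^ k) x) ((σ ^ (k+1)) x) ((g ((σ ^ k) x))⁻¹ * g ((σ ^ (k+1)) x)) *
            ((((g ((σ ^ k) x))⁻¹ * g ((σ ^ (k+1)) x)))⁻¹ * cj x ((σ ^ k) x) ((g x)⁻¹ * g ((σ ^ k) x)) *
              (((g ((σ ^ k) x))⁻¹ * g ((σ ^ (k+1)) x)))) := by
        unfold cj; group
      rw [e]
      refine mul_mem h2 ?_
      have := Subgroup.Normal.conj_mem (Subgroup.normalClosure_normal) _ h1
        (((g ((σ ^ k) x))⁻¹ * g ((σ ^ (k+1)) x)))⁻¹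
      simpa using this
    have e2 : ((g x)⁻¹ * g ((σ ^ k) x)) * ((g ((σ ^ k) x))⁻¹ * g ((σ ^ (k + 1)) x)) =
        (g x)⁻¹ * g ((σ ^ (k + 1)) x) := by group
    rwa [e2] at h3




open Relation

/- ===== EqvGen generalities (from L2) ===== -/
variable {α : Type*}

lemma eqvgen_congr {r r' : α → α → Prop} (h : ∀ u v, r u v ↔ r' u v) {x y : α} :
    EqvGen r x y ↔ EqvGen r' x y :=
  ⟨fun hxy => EqvGen.mono (fun u v huv => (h u v).1 huv) _ _ hxy,
   fun hxy => EqvGen.mono (fun u v huv => (h u v).2 huv) _ _ hxy⟩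

section Counting

variable {n s : ℕ} (a b : Fin s → Fin n)

def pEdge (t : ℕ) : Fin n → Fin n → Prop :=
  fun i j => ∃ q : Fin s, q.1 < t ∧ a q = i ∧ b q = j

abbrev EQ (t : ℕ) : Fin n → Fin n → Prop := Relation.EqvGen (pEdge a b t)

variable {a b} in
lemma EQ.symm {t : ℕ} {i j : Fin n} (h : EQ a b t i j) : EQ a b t j i :=
  Relation.EqvGen.symm _ _ h

variable {a b} in
lemma EQ.trans {t : ℕ} {i j k : Fin n} (h1 : EQ a b t i j) (h2 : EQ a b t j k) :
    EQ a b t i k := Relation.EqvGen.trans _ _ _ h1 h2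

lemma EQ.refl (t : ℕ) (i : Fin n) : EQ a b t i i := Relation.EqvGen.refl i

def Cl (t : ℕ) (i : Fin n) : Set (Fin n) := {j | EQ a b t i j}
def Eg (t : ℕ) (i : Fin n) : Set (Fin s) := {q | q.1 < t ∧ EQ a b t i (a q)}
noncomputable def vC (t : ℕ) (i : Fin n) : ℕ := (Cl a b t i).ncard
noncomputable def eC (t : ℕ) (i : Fin n) : ℕ := (Eg a b t i).ncard

variable {a b}

lemma EQ_class_iff {t : ℕ} {i i' : Fin n} (h : EQ a b t i i') (x : Fin n) :
    EQ a b t i x ↔ EQ a b t i' x :=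
  ⟨fun h2 => h.symm.trans h2, fun h2 => h.trans h2⟩

lemma vC_class_inv {t : ℕ} {i i' : Fin n} (h : EQ a b t i i') : vC a b t i = vC a b t i' := by
  unfold vC Cl
  congr 1
  ext x
  exact EQ_class_iff h x

lemma eC_class_inv {t : ℕ} {i i' : Fin n} (h : EQ a b t i i') : eC a b t i = eC a b t i' := by
  unfold eC Eg
  congr 1
  ext q
  exact and_congr_right fun _ => EQ_class_iff h (a q)

lemma pEdge_zero (x y : Fin n) : pEdge a b 0 x y ↔ False := by
  constructor
  · rintro ⟨q, hq, -⟩; exact absurd hq (Nat.not_lt_zero _)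
  · exact False.elim

lemma EQ_zero {x y : Fin n} (h0 : EQ a b 0 x y) : x = y := by
  have h1 : EqvGen (fun _ _ : Fin n => False) x y :=
    (eqvgen_congr (fun u v => pEdge_zero u v)).1 h0
  clear h0
  induction h1 with
  | rel _ _ h => exact h.elim
  | refl _ => rfl
  | symm _ _ _ ih => exact ih.symm
  | trans _ _ _ _ _ ih1 ih2 => exact ih1.trans ih2

lemma pEdge_succ {t : ℕ} (ht : t < s) (x y : Fin n) :
    pEdge a b (t + 1) x y ↔
      (pEdge a b t x y ∨ (x = a ⟨t, ht⟩ ∧ y = b ⟨t, ht⟩)) := by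
  constructor
  · rintro ⟨q, hq, e1, e2⟩
    rcases Nat.lt_succ_iff_lt_or_eq.1 hq with hq' | hq'
    · exact Or.inl ⟨q, hq', e1, e2⟩
    · have : q = ⟨t, ht⟩ := Fin.ext hq'
      subst this
      exact Or.inr ⟨e1.symm, e2.symm⟩
  · rintro (⟨q, hq, e1, e2⟩ | ⟨rfl, rfl⟩)
    · exact ⟨q, Nat.lt_succ_of_lt hq, e1, e2⟩
    · exact ⟨⟨t, ht⟩, Nat.lt_succ_self t, rfl, rfl⟩

lemma EQ_succ_iff {t : ℕ} (ht : t < s) {x y : Fin n} :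
    EQ a b (t + 1) x y ↔
      (EQ a b t x y ∨ (EQ a b t x (a ⟨t, ht⟩) ∧ EQ a b t (b ⟨t, ht⟩) y) ∨
        (EQ a b t x (b ⟨t, ht⟩) ∧ EQ a b t (a ⟨t, ht⟩) y)) := by
  exact (eqvgen_congr (pEdge_succ ht)).trans eqvgen_ext_iff

lemma EQ_succ_of {t : ℕ} (ht : t < s) {x y : Fin n} (h : EQ a b t x y) :
    EQ a b (t + 1) x y := (EQ_succ_iff ht).2 (Or.inl h)

lemma EQ_succ_edge {t : ℕ} (ht : t < s) :
    EQ a b (t + 1) (a ⟨t, ht⟩) (b ⟨t, ht⟩) :=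
  (EQ_succ_iff ht).2 (Or.inr (Or.inl ⟨EqvGen.refl _, EqvGen.refl _⟩))

section Step

variable {t : ℕ} (ht : t < s)

/-- Case far: `i` is not equivalent to either endpoint. -/
lemma far_Cl (hA : ¬ EQ a b t i (a ⟨t, ht⟩)) (hB : ¬ EQ a b t i (b ⟨t, ht⟩)) :
    ∀ x, EQ a b (t+1) i x ↔ EQ a b t i x := by
  intro x
  rw [EQ_succ_iff ht]
  constructor
  · rintro (h | ⟨h1, h2⟩ | ⟨h1, h2⟩)
    · exact h
    · exact absurd h1 hA
    · exact absurd h1 hB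
  · exact Or.inl

lemma far_counts (hA : ¬ EQ a b t i (a ⟨t, ht⟩)) (hB : ¬ EQ a b t i (b ⟨t, ht⟩)) :
    vC a b (t+1) i = vC a b t i ∧ eC a b (t+1) i = eC a b t i := by
  constructor
  · unfold vC Cl
    congr 1
    ext x
    exact far_Cl ht hA hB x
  · unfold eC Eg
    congr 1
    ext q
    simp only [Set.mem_setOf_eq]
    constructor
    · rintro ⟨hq, h2⟩
      have h2' := (far_Cl ht hA hB (a q)).1 h2
      rcases Nat.lt_succ_iff_lt_or_eq.1 hq with hq' | hq'
      · exact ⟨hq', h2'⟩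
      · exfalso
        have : q = ⟨t, ht⟩ := Fin.ext hq'
        subst this
        exact hA h2'
    · rintro ⟨hq, h2⟩
      exact ⟨Nat.lt_succ_of_lt hq, (far_Cl ht hA hB (a q)).2 h2⟩

/-- Case same: endpoints already equivalent. -/
lemma same_EQ (hAB : EQ a b t (a ⟨t, ht⟩) (b ⟨t, ht⟩)) :
    ∀ x y, EQ a b (t+1) x y ↔ EQ a b t x y := by
  intro x y
  rw [EQ_succ_iff ht]
  constructor
  · rintro (h | ⟨h1, h2⟩ | ⟨h1, h2⟩)
    · exact h
    · exact (h1.trans hAB).trans h2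
    · exact (h1.trans hAB.symm).trans h2
  · exact Or.inl

lemma same_counts (hAB : EQ a b t (a ⟨t, ht⟩) (b ⟨t, ht⟩)) (hi : EQ a b t i (a ⟨t, ht⟩)) :
    vC a b (t+1) i = vC a b t i ∧ eC a b (t+1) i = eC a b t i + 1 := by
  constructor
  · unfold vC Cl
    congr 1
    ext x
    exact same_EQ ht hAB i x
  · unfold eC Eg
    have hset : {q : Fin s | q.1 < t + 1 ∧ EQ a b (t+1) i (a q)} =
        insert ⟨t, ht⟩ {q : Fin s | q.1 < t ∧ EQ a b t i (a q)} := by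
      ext q
      simp only [Set.mem_setOf_eq, Set.mem_insert_iff]
      constructor
      · rintro ⟨hq, h2⟩
        rcases Nat.lt_succ_iff_lt_or_eq.1 hq with hq' | hq'
        · exact Or.inr ⟨hq', (same_EQ ht hAB i (a q)).1 h2⟩
        · exact Or.inl (Fin.ext hq')
      · rintro (rfl | ⟨hq, h2⟩)
        · exact ⟨Nat.lt_succ_self t, (same_EQ ht hAB i _).2 hi⟩
        · exact ⟨Nat.lt_succ_of_lt hq, (same_EQ ht hAB i (a q)).2 h2⟩
    rw [hset, Set.ncard_insert_of_notMem (by simp) (Set.toFinite _)]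

/-- Case merge: distinct components joined. -/
lemma merge_mem (hAB : ¬ EQ a b t (a ⟨t, ht⟩) (b ⟨t, ht⟩))
    (hi : EQ a b t i (a ⟨t, ht⟩) ∨ EQ a b t i (b ⟨t, ht⟩)) :
    ∀ x, EQ a b (t+1) i x ↔ (EQ a b t (a ⟨t, ht⟩) x ∨ EQ a b t (b ⟨t, ht⟩) x) := by
  intro x
  rw [EQ_succ_iff ht]
  constructor
  · rintro (h | ⟨h1, h2⟩ | ⟨h1, h2⟩)
    · rcases hi with hi | hi
      · exact Or.inl (hi.symm.trans h)
      · exact Or.inr (hi.symm.trans h)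
    · exact Or.inr h2
    · exact Or.inl h2
  · rintro (h | h)
    · rcases hi with hi | hi
      · exact Or.inl (hi.trans h)
      · exact Or.inr (Or.inr ⟨hi, h⟩)
    · rcases hi with hi | hi
      · exact Or.inr (Or.inl ⟨hi, h⟩)
      · exact Or.inl (hi.trans h)

lemma merge_counts (hAB : ¬ EQ a b t (a ⟨t, ht⟩) (b ⟨t, ht⟩))
    (hi : EQ a b t i (a ⟨t, ht⟩) ∨ EQ a b t i (b ⟨t, ht⟩)) :
    vC a b (t+1) i = vC a b t (a ⟨t, ht⟩) + vC a b t (b ⟨t, ht⟩) ∧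
      eC a b (t+1) i = eC a b t (a ⟨t, ht⟩) + eC a b t (b ⟨t, ht⟩) + 1 := by
  set A := a ⟨t, ht⟩
  set B := b ⟨t, ht⟩
  constructor
  · unfold vC Cl
    have hset : {j | EQ a b (t+1) i j} = {j | EQ a b t A j} ∪ {j | EQ a b t B j} := by
      ext x
      exact merge_mem ht hAB hi x
    rw [hset, Set.ncard_union_eq ?_ (Set.toFinite _) (Set.toFinite _)]
    rw [Set.disjoint_left]
    rintro x hx1 hx2
    exact hAB (hx1.trans hx2.symm)
  · unfold eC Eg
    have hset : {q : Fin s | q.1 < t + 1 ∧ EQ a b (t+1) i (a q)} =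
        insert ⟨t, ht⟩ ({q : Fin s | q.1 < t ∧ EQ a b t A (a q)} ∪
          {q : Fin s | q.1 < t ∧ EQ a b t B (a q)}) := by
      ext q
      simp only [Set.mem_setOf_eq, Set.mem_insert_iff, Set.mem_union]
      constructor
      · rintro ⟨hq, h2⟩
        rcases Nat.lt_succ_iff_lt_or_eq.1 hq with hq' | hq'
        · rcases (merge_mem ht hAB hi (a q)).1 h2 with h | h
          · exact Or.inr (Or.inl ⟨hq', h⟩)
          · exact Or.inr (Or.inr ⟨hq', h⟩)
        · exact Or.inl (Fin.ext hq')
      · rintro (rfl | ⟨hq, h2⟩ | ⟨hq, h2⟩)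
        · exact ⟨Nat.lt_succ_self t, (merge_mem ht hAB hi _).2 (Or.inl (EqvGen.refl _))⟩
        · exact ⟨Nat.lt_succ_of_lt hq, (merge_mem ht hAB hi (a q)).2 (Or.inl h2)⟩
        · exact ⟨Nat.lt_succ_of_lt hq, (merge_mem ht hAB hi (a q)).2 (Or.inr h2)⟩
    rw [hset, Set.ncard_insert_of_notMem (by simp) (Set.toFinite _),
      Set.ncard_union_eq ?_ (Set.toFinite _) (Set.toFinite _)]
    rw [Set.disjoint_left]
    rintro q ⟨_, h1⟩ ⟨_, h2⟩
    exact hAB (h1.trans h2.symm)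

end Step

/-- connectivity: a class with `v` vertices contains at least `v - 1` edges -/
lemma conn : ∀ t : ℕ, t ≤ s → ∀ i : Fin n, vC a b t i ≤ eC a b t i + 1 := by
  intro t
  induction t with
  | zero =>
    intro _ i
    have : Cl a b 0 i = {i} := by
      ext x
      simp only [Cl, Set.mem_setOf_eq, Set.mem_singleton_iff]
      exact ⟨fun h => (EQ_zero h).symm, fun h => by rw [h]; exact Relation.EqvGen.refl i⟩
    unfold vC
    rw [this, Set.ncard_singleton]
    exact Nat.le_add_left 1 _
  | succ t ih =>
    intro hts i
    have ht : t < s := Nat.lt_of_succ_le hts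
    have iht := ih (Nat.le_of_lt ht)
    set A := a ⟨t, ht⟩ with hA
    set B := b ⟨t, ht⟩ with hB
    by_cases hiA : EQ a b t i A
    case pos =>
      by_cases hAB : EQ a b t A B
      · obtain ⟨hv, he⟩ := same_counts ht hAB hiA
        rw [hv, he]
        calc vC a b t i ≤ eC a b t i + 1 := iht i
          _ ≤ eC a b t i + 1 + 1 := Nat.le_succ _
      · obtain ⟨hv, he⟩ := merge_counts ht hAB (Or.inl hiA)
        rw [← hA, ← hB] at hv he
        rw [hv, he]
        have h1 := iht A
        have h2 := iht B
        omega
    case neg =>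
      by_cases hiB : EQ a b t i B
      · by_cases hAB : EQ a b t A B
        · exact absurd ((hiB.trans hAB.symm)) hiA
        · obtain ⟨hv, he⟩ := merge_counts ht hAB (Or.inr hiB)
          rw [← hA, ← hB] at hv he
          rw [hv, he]
          have h1 := iht A
          have h2 := iht B
          omega
      · obtain ⟨hv, he⟩ := far_counts ht hiA hiB
        rw [hv, he]
        exact iht i

/-- Euler condition propagates downward to prefixes. -/
lemma prefix_euler (hfull : ∀ i : Fin n, eC a b s i ≤ vC a b s i) :
    ∀ t : ℕ, t ≤ s → ∀ i : Fin n, eC a b t i ≤ vC a b t i := by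
  suffices H : ∀ k t, t ≤ s → s - t = k → ∀ i : Fin n, eC a b t i ≤ vC a b t i by
    intro t hts i
    exact H (s - t) t hts rfl i
  intro k
  induction k with
  | zero =>
    intro t hts hk i
    have : t = s := by omega
    subst this
    exact hfull i
  | succ k ihk =>
    intro t hts hk i
    have ht : t < s := by omega
    have next : ∀ i : Fin n, eC a b (t+1) i ≤ vC a b (t+1) i := by
      intro i
      exact ihk (t+1) (by omega) (by omega) i
    set A := a ⟨t, ht⟩ with hA
    set B := b ⟨t, ht⟩ with hB
    by_cases hiA : EQ a b t i A
    case pos =>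
      by_cases hAB : EQ a b t A B
      · obtain ⟨hv, he⟩ := same_counts ht hAB hiA
        have := next i
        omega
      · obtain ⟨hv, he⟩ := merge_counts ht hAB (Or.inl hiA)
        rw [← hA, ← hB] at hv he
        have h1 := next i
        have h2 := conn (a := a) (b := b) t (by omega) B
        have h3 := conn (a := a) (b := b) t (by omega) A
        have h4 : eC a b t i = eC a b t A := eC_class_inv hiA
        have h5 : vC a b t i = vC a b t A := vC_class_inv hiA
        omega
    case neg =>
      by_cases hiB : EQ a b t i B
      · by_cases hAB : EQ a b t A B
        · exact absurd (hiB.trans hAB.symm) hiA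
        · obtain ⟨hv, he⟩ := merge_counts ht hAB (Or.inr hiB)
          rw [← hA, ← hB] at hv he
          have h1 := next i
          have h2 := conn (a := a) (b := b) t (by omega) B
          have h3 := conn (a := a) (b := b) t (by omega) A
          have h4 : eC a b t i = eC a b t B := eC_class_inv hiB
          have h5 : vC a b t i = vC a b t B := vC_class_inv hiB
          omega
      · obtain ⟨hv, he⟩ := far_counts ht hiA hiB
        have := next i
        omega

end Counting


section L5

variable {n s : ℕ} (a b : Fin s → Fin n) (w : Fin s → FreeGroup (Fin n))

/-- prefix relator sets -/
def pRels (t : ℕ) : Set (FreeGroup (Fin n)) :=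
  { r | ∃ q : Fin s, q.1 < t ∧ r = cj (b q) (a q) (w q) }

lemma pRels_zero : pRels a b w 0 = ∅ := by
  ext r
  simp only [pRels, Set.mem_setOf_eq, Set.mem_empty_iff_false, iff_false]
  rintro ⟨q, hq, -⟩
  exact absurd hq (Nat.not_lt_zero _)

lemma pRels_succ {t : ℕ} (ht : t < s) :
    pRels a b w (t+1) = pRels a b w t ∪ {cj (b ⟨t, ht⟩) (a ⟨t, ht⟩) (w ⟨t, ht⟩)} := by
  ext r
  simp only [pRels, Set.mem_setOf_eq, Set.mem_union, Set.mem_singleton_iff]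
  constructor
  · rintro ⟨q, hq, rfl⟩
    rcases Nat.lt_succ_iff_lt_or_eq.1 hq with hq' | hq'
    · exact Or.inl ⟨q, hq', rfl⟩
    · have : q = ⟨t, ht⟩ := Fin.ext hq'
      subst this
      exact Or.inr rfl
  · rintro (⟨q, hq, rfl⟩ | rfl)
    · exact ⟨q, Nat.lt_succ_of_lt hq, rfl⟩
    · exact ⟨⟨t, ht⟩, Nat.lt_succ_self t, rfl⟩

/-- isolated vertex in the prefix graph -/
def isol (t : ℕ) (p : Fin n) : Prop := ∀ q : Fin s, q.1 < t → a q ≠ p ∧ b q ≠ p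

variable {a b w}

lemma isol_class {t : ℕ} {X : Fin n} (hX : isol a b t X) :
    ∀ y, EQ a b t X y → y = X := by
  have key : ∀ u v, EQ a b t u v → (u = X → v = X) ∧ (v = X → u = X) := by
    intro u v huv
    induction huv with
    | rel u v h =>
      obtain ⟨q, hq, e1, e2⟩ := h
      constructor
      · rintro rfl
        exact absurd e1 (hX q hq).1
      · rintro rfl
        exact absurd e2 (hX q hq).2
    | refl u => exact ⟨id, id⟩
    | symm u v _ ih => exact ⟨ih.2, ih.1⟩
    | trans u v z _ _ ih1 ih2 => exact ⟨fun h => ih2.1 (ih1.1 h), fun h => ih1.2 (ih2.2 h)⟩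
  intro y hy
  exact (key X y hy).1 rfl

lemma isol_vC {t : ℕ} {X : Fin n} (hX : isol a b t X) : vC a b t X = 1 := by
  have : Cl a b t X = {X} := by
    ext y
    simp only [Cl, Set.mem_setOf_eq, Set.mem_singleton_iff]
    exact ⟨fun h => isol_class hX y h, fun h => by rw [h]; exact Relation.EqvGen.refl X⟩
  unfold vC
  rw [this, Set.ncard_singleton]

lemma isol_eC {t : ℕ} {X : Fin n} (hX : isol a b t X) : eC a b t X = 0 := by
  have : Eg a b t X = ∅ := by
    ext q
    simp only [Eg, Set.mem_setOf_eq, Set.mem_empty_iff_false, iff_false, not_and]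
    intro hq h
    exact (hX q hq).1 (isol_class hX (a q) h)
  unfold eC
  rw [this, Set.ncard_empty]

lemma cj_congr {i j : Fin n} {u v : FreeGroup (Fin n)} (h : u = v) : cj i j u = cj i j v := by
  rw [h]

lemma ncl_ins_flip {T : Set (FreeGroup (Fin n))} {i j : Fin n} {u : FreeGroup (Fin n)} :
    NC (T ∪ {cj i j u}) = NC (T ∪ {cj j i u⁻¹}) := by
  apply ncl_eq_of
  · rintro r (hr | hr)
    · exact Subgroup.subset_normalClosure (Or.inl hr)
    · rw [Set.mem_singleton_iff] at hr
      subst hr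
      have h1 : cj j i u⁻¹ ∈ NC (T ∪ {cj j i u⁻¹}) :=
        Subgroup.subset_normalClosure (Or.inr rfl)
      have h2 := ncl_flip h1
      rwa [inv_inv] at h2
  · rintro r (hr | hr)
    · exact Subgroup.subset_normalClosure (Or.inl hr)
    · rw [Set.mem_singleton_iff] at hr
      subst hr
      exact ncl_flip (Subgroup.subset_normalClosure (Or.inr rfl))

lemma cyc_ncl_eq {σ σ' : Equiv.Perm (Fin n)} {w' w'' : Fin n → FreeGroup (Fin n)}
    (E : Set (FreeGroup (Fin n))) (D : Set (Fin n))
    (hsame : ∀ p, p ∉ D → σ' p = σ p ∧ w'' p = w' p)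
    (fwd : ∀ p ∈ D, cj p (σ' p) (w'' p) ∈ NC (cycSet σ w' ∪ E))
    (bwd : ∀ p ∈ D, cj p (σ p) (w' p) ∈ NC (cycSet σ' w''))
    (ebwd : E ⊆ ↑(NC (cycSet σ' w''))) :
    NC (cycSet σ' w'') = NC (cycSet σ w' ∪ E) := by
  apply ncl_eq_of
  · rintro r ⟨p, rfl⟩
    by_cases hp : p ∈ D
    · exact fwd p hp
    · obtain ⟨h1, h2⟩ := hsame p hp
      rw [h1, h2]
      exact Subgroup.subset_normalClosure (Or.inl ⟨p, rfl⟩)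
  · rintro r (⟨p, rfl⟩ | hr)
    · by_cases hp : p ∈ D
      · exact bwd p hp
      · obtain ⟨h1, h2⟩ := hsame p hp
        rw [← h1, ← h2]
        exact Subgroup.subset_normalClosure ⟨p, rfl⟩
    · exact ebwd hr

/-- The invariant carried through the induction. -/
structure Inv (a b : Fin s → Fin n) (w : Fin s → FreeGroup (Fin n)) (t : ℕ)
    (σ : Equiv.Perm (Fin n)) (w' g : Fin n → FreeGroup (Fin n)) : Prop where
  ncl : NC (cycSet σ w') = NC (pRels a b w t)
  isolFix : ∀ p, isol a b t p → σ p = p ∧ w' p = 1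
  comp : ∀ p, EQ a b t p (σ p)
  pot : ∀ p, eC a b t p < vC a b t p → w' p = (g p)⁻¹ * g (σ p)
  cyc : ∀ p p', eC a b t p < vC a b t p → ¬ isol a b t p → ¬ isol a b t p' →
      EQ a b t p p' → Reach σ p p'

lemma EQ_pow {t : ℕ} {σ : Equiv.Perm (Fin n)} (hcomp : ∀ p, EQ a b t p (σ p))
    (p : Fin n) : ∀ k : ℕ, EQ a b t p ((σ ^ k) p) := by
  intro k
  induction k with
  | zero => exact Relation.EqvGen.refl p
  | succ k ih =>
    have h1 := hcomp ((σ ^ k) p)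
    rw [← pow_succ_apply] at h1
    exact ih.trans h1

/-- walking along the cycle of an unsaturated component, in the current system -/
lemma reach_pot_mem {t : ℕ} {σ : Equiv.Perm (Fin n)} {w' g : Fin n → FreeGroup (Fin n)}
    (hcomp : ∀ p, EQ a b t p (σ p))
    (hpot : ∀ p, eC a b t p < vC a b t p → w' p = (g p)⁻¹ * g (σ p))
    {p z : Fin n} (hu : eC a b t p < vC a b t p) (hr : Reach σ p z) :
    cj p z ((g p)⁻¹ * g z) ∈ NC (cycSet σ w') := by
  obtain ⟨k, rfl⟩ := hr
  apply walk
  intro j hj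
  rw [pow_succ_apply]
  apply hpot
  have hclass : EQ a b t p ((σ ^ j) p) := EQ_pow hcomp p j
  rw [← eC_class_inv hclass, ← vC_class_inv hclass]
  exact hu

/-- a `σ * swap c d`-trajectory agrees with the `σ`-trajectory while it avoids `c, d` -/
lemma pow_mul_swap_eq {σ : Equiv.Perm (Fin n)} {c d x : Fin n} {k : ℕ}
    (havoid : ∀ j, j < k → (σ ^ j) x ≠ c ∧ (σ ^ j) x ≠ d) :
    ∀ j, j ≤ k → ((σ * Equiv.swap c d) ^ j) x = (σ ^ j) x := by
  intro j hj
  induction j with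
  | zero => rfl
  | succ j ih =>
    have hj' : j ≤ k := Nat.le_of_succ_le hj
    rw [pow_succ_apply, pow_succ_apply, ih hj']
    have ⟨h1, h2⟩ := havoid j (Nat.lt_of_succ_le hj)
    rw [Equiv.Perm.mul_apply, Equiv.swap_apply_of_ne_of_ne h1 h2]

lemma reach_mul_swap {σ : Equiv.Perm (Fin n)} {c d x z : Fin n} {k : ℕ}
    (hk : (σ ^ k) x = z) (havoid : ∀ j, j < k → (σ ^ j) x ≠ c ∧ (σ ^ j) x ≠ d) :
    Reach (σ * Equiv.swap c d) x z :=
  ⟨k, by rw [pow_mul_swap_eq havoid k le_rfl, hk]⟩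

end L5

section Steps

variable {n s : ℕ} {a b : Fin s → Fin n} {w : Fin s → FreeGroup (Fin n)}

/-- helper: least-step reachability -/
lemma reach_find {σ : Equiv.Perm (Fin n)} {x z : Fin n} (h : Reach σ x z) :
    ∃ k : ℕ, (σ ^ k) x = z ∧ ∀ j, j < k → (σ ^ j) x ≠ z :=
  ⟨Nat.find h, Nat.find_spec h, fun j hj hne => Nat.find_min h hj hne⟩

/-- Chord case: both endpoints non-isolated and already in the same component. -/
lemma stepChord {t : ℕ} {σ : Equiv.Perm (Fin n)} {w' g : Fin n → FreeGroup (Fin n)}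
    {X Y : Fin n} {ω : FreeGroup (Fin n)}
    (inv : Inv a b w t σ w' g)
    (hrels : NC (pRels a b w (t+1)) = NC (pRels a b w t ∪ {cj X Y ω}))
    (hedge : ∀ x y, EQ a b (t+1) x y ↔
      (EQ a b t x y ∨ (EQ a b t x X ∧ EQ a b t Y y) ∨ (EQ a b t x Y ∧ EQ a b t X y)))
    (hisol : ∀ p, isol a b (t+1) p ↔ (isol a b t p ∧ p ≠ X ∧ p ≠ Y))
    (hXnon : ¬ isol a b t X) (hYnon : ¬ isol a b t Y)
    (hEQXY : EQ a b t X Y)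
    (hXuns : eC a b t X < vC a b t X)
    (hfar : ∀ p, ¬ EQ a b t p X → ¬ EQ a b t p Y →
      eC a b (t+1) p = eC a b t p ∧ vC a b (t+1) p = vC a b t p)
    (hsame_cnt : ∀ i, EQ a b t i X →
      eC a b (t+1) i = eC a b t i + 1 ∧ vC a b (t+1) i = vC a b t i)
    (hconn : ∀ i, vC a b t i ≤ eC a b t i + 1) :
    ∃ (σ' : Equiv.Perm (Fin n)) (w'' g' : Fin n → FreeGroup (Fin n)),
      Inv a b w (t+1) σ' w'' g' := by
  classical
  set p₁ := σ⁻¹ Y with hp₁def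
  have hσp₁ : σ p₁ = Y := Equiv.apply_symm_apply σ Y
  have hp₁Y : EQ a b t p₁ Y := by
    have := inv.comp p₁
    rwa [hσp₁] at this
  have hp₁X : EQ a b t p₁ X := hp₁Y.trans hEQXY.symm
  have hp₁non : ¬ isol a b t p₁ := by
    intro hiso
    have := (inv.isolFix p₁ hiso).1
    rw [hσp₁] at this
    exact hYnon (this ▸ hiso)
  have hp₁uns : eC a b t p₁ < vC a b t p₁ := by
    rwa [eC_class_inv hp₁X.symm, vC_class_inv hp₁X.symm] at hXuns
  -- the new word at p₁
  set v := ((g p₁)⁻¹ * g X) * ω with hvdef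
  refine ⟨σ, Function.update w' p₁ v, g, ?_⟩
  set w'' := Function.update w' p₁ v with hw''def
  have hw''p₁ : w'' p₁ = v := Function.update_self p₁ v w'
  have hw''ne : ∀ p, p ≠ p₁ → w'' p = w' p := fun p hp => Function.update_of_ne hp v w'
  -- EQ at t+1 equals EQ at t
  have hEQ' : ∀ x y, EQ a b (t+1) x y ↔ EQ a b t x y := by
    intro x y
    rw [hedge]
    constructor
    · rintro (h | ⟨h1, h2⟩ | ⟨h1, h2⟩)
      · exact h
      · exact (h1.trans hEQXY).trans h2
      · exact (h1.trans hEQXY.symm).trans h2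
    · exact Or.inl
  -- non-isolation transfer
  have hnisol : ∀ p, ¬ isol a b (t+1) p → ¬ EQ a b t p X → ¬ isol a b t p := by
    intro p h1 h2 h3
    apply h1
    rw [hisol]
    refine ⟨h3, ?_, ?_⟩
    · rintro rfl; exact h2 (Relation.EqvGen.refl _)
    · rintro rfl; exact h2 hEQXY.symm
  -- membership derivations
  have walkOld : cj p₁ X ((g p₁)⁻¹ * g X) ∈ NC (cycSet σ w') :=
    reach_pot_mem inv.comp inv.pot hp₁uns
      (inv.cyc p₁ X hp₁uns hp₁non hXnon hp₁X)
  -- new system walks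
  have potNew : ∀ z : Fin n, EQ a b t z X → ∀ k : ℕ,
      (∀ j, j < k → (σ ^ j) z ≠ p₁) →
      cj z ((σ ^ k) z) ((g z)⁻¹ * g ((σ ^ k) z)) ∈ NC (cycSet σ w'') := by
    intro z hz k havoid
    apply walk
    intro j hj
    rw [hw''ne _ (havoid j hj), pow_succ_apply]
    apply inv.pot
    have hclass : EQ a b t X ((σ ^ j) z) := hz.symm.trans (EQ_pow inv.comp z j)
    rwa [eC_class_inv hclass, vC_class_inv hclass] at hXuns
  have fwd : cj p₁ (σ p₁) (w'' p₁) ∈ NC (cycSet σ w' ∪ {cj X Y ω}) := by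
    rw [hσp₁, hw''p₁, hvdef]
    refine ncl_trans (ncl_mono Set.subset_union_left walkOld) ?_
    exact Subgroup.subset_normalClosure (Or.inr rfl)
  have newAtp₁ : cj p₁ Y v ∈ NC (cycSet σ w'') := by
    have : cj p₁ (σ p₁) (w'' p₁) ∈ NC (cycSet σ w'') :=
      Subgroup.subset_normalClosure ⟨p₁, rfl⟩
    rwa [hσp₁, hw''p₁] at this
  have bwd : cj p₁ (σ p₁) (w' p₁) ∈ NC (cycSet σ w'') := by
    obtain ⟨k, hk, hmin⟩ := reach_find (reach_inv σ Y : Reach σ Y p₁)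
    have walkNew := potNew Y hEQXY.symm k (fun j hj => fun e => hmin j hj e)
    rw [hk] at walkNew
    have flipped := ncl_flip walkNew
    have hword : ((g Y)⁻¹ * g p₁)⁻¹ = (g p₁)⁻¹ * g Y := by group
    rw [hword] at flipped
    have hpot₁ : w' p₁ = (g p₁)⁻¹ * g (σ p₁) := inv.pot p₁ hp₁uns
    rw [hσp₁] at hpot₁
    rw [hσp₁, hpot₁]
    exact flipped
  have ebwd : cj X Y ω ∈ NC (cycSet σ w'') := by
    obtain ⟨k, hk, hmin⟩ := reach_find (inv.cyc X p₁ hXuns hXnon hp₁non hp₁X.symm)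
    have walkNew := potNew X (Relation.EqvGen.refl X) k (fun j hj => fun e => hmin j hj e)
    rw [hk] at walkNew
    have comb := ncl_trans walkNew newAtp₁
    have hword : (((g X)⁻¹ * g p₁) * v) = ω := by rw [hvdef]; group
    rwa [hword] at comb
  have hncl : NC (cycSet σ w'') = NC (pRels a b w (t+1)) := by
    rw [hrels, ← ncl_union_congr inv.ncl]
    apply cyc_ncl_eq {cj X Y ω} {p₁}
    · intro p hp
      exact ⟨rfl, hw''ne p (by simpa using hp)⟩
    · intro p hp
      rw [Set.mem_singleton_iff] at hp
      subst hp
      exact fwd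
    · intro p hp
      rw [Set.mem_singleton_iff] at hp
      subst hp
      exact bwd
    · intro r hr
      rw [Set.mem_singleton_iff] at hr
      subst hr
      exact ebwd
  refine ⟨hncl, ?_, ?_, ?_, ?_⟩
  · -- isolFix
    intro p hp
    rw [hisol] at hp
    obtain ⟨hp1, hp2, hp3⟩ := hp
    refine ⟨(inv.isolFix p hp1).1, ?_⟩
    have hpne : p ≠ p₁ := by
      rintro rfl
      exact hp₁non hp1
    rw [hw''ne p hpne]
    exact (inv.isolFix p hp1).2
  · -- comp
    intro p
    rw [hEQ']
    exact inv.comp p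
  · -- pot
    intro p hpuns
    by_cases hpX : EQ a b t p X
    · exfalso
      obtain ⟨he, hv⟩ := hsame_cnt p hpX
      have := hconn p
      omega
    · have hpY : ¬ EQ a b t p Y := fun h => hpX (h.trans hEQXY.symm)
      obtain ⟨he, hv⟩ := hfar p hpX hpY
      rw [he, hv] at hpuns
      have hpne : p ≠ p₁ := by
        rintro rfl
        exact hpX hp₁X
      rw [hw''ne p hpne]
      exact inv.pot p hpuns
  · -- cyc
    intro p p' hpuns hpn hpn' hpp'
    by_cases hpX : EQ a b t p X
    · exfalso
      obtain ⟨he, hv⟩ := hsame_cnt p hpX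
      have := hconn p
      omega
    · have hpY : ¬ EQ a b t p Y := fun h => hpX (h.trans hEQXY.symm)
      obtain ⟨he, hv⟩ := hfar p hpX hpY
      rw [he, hv] at hpuns
      have hp'X : ¬ EQ a b t p' X := fun h => hpX (((hEQ' p p').1 hpp').trans h)
      exact inv.cyc p p' hpuns (hnisol p hpn hpX) (hnisol p' hpn' hp'X)
        ((hEQ' p p').1 hpp')

/-- Merge case: both endpoints non-isolated, in different components,
`X`-side unsaturated. -/
lemma stepMerge {t : ℕ} {σ : Equiv.Perm (Fin n)} {w' g : Fin n → FreeGroup (Fin n)}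
    {X Y : Fin n} {ω : FreeGroup (Fin n)}
    (inv : Inv a b w t σ w' g)
    (hrels : NC (pRels a b w (t+1)) = NC (pRels a b w t ∪ {cj X Y ω}))
    (hedge : ∀ x y, EQ a b (t+1) x y ↔
      (EQ a b t x y ∨ (EQ a b t x X ∧ EQ a b t Y y) ∨ (EQ a b t x Y ∧ EQ a b t X y)))
    (hisol : ∀ p, isol a b (t+1) p ↔ (isol a b t p ∧ p ≠ X ∧ p ≠ Y))
    (hYnon : ¬ isol a b t Y)
    (hnEQ : ¬ EQ a b t X Y)
    (hXuns : eC a b t X < vC a b t X)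
    (hfar : ∀ p, ¬ EQ a b t p X → ¬ EQ a b t p Y →
      eC a b (t+1) p = eC a b t p ∧ vC a b (t+1) p = vC a b t p)
    (hmerge_cnt : ∀ i, EQ a b t i X ∨ EQ a b t i Y →
      eC a b (t+1) i = eC a b t X + eC a b t Y + 1 ∧
        vC a b (t+1) i = vC a b t X + vC a b t Y)
    (hconn : ∀ i, vC a b t i ≤ eC a b t i + 1) :
    ∃ (σ' : Equiv.Perm (Fin n)) (w'' g' : Fin n → FreeGroup (Fin n)),
      Inv a b w (t+1) σ' w'' g' := by
  classical
  set p₁ := σ⁻¹ Y with hp₁def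
  have hσp₁ : σ p₁ = Y := Equiv.apply_symm_apply σ Y
  have hp₁Y : EQ a b t p₁ Y := by
    have := inv.comp p₁
    rwa [hσp₁] at this
  have hp₁non : ¬ isol a b t p₁ := by
    intro hiso
    have := (inv.isolFix p₁ hiso).1
    rw [hσp₁] at this
    exact hYnon (this ▸ hiso)
  have hXp₁ : X ≠ p₁ := by
    rintro rfl
    exact hnEQ hp₁Y
  have hσXX : EQ a b t (σ X) X := (inv.comp X).symm
  have hσXnY : ¬ EQ a b t (σ X) Y := fun h => hnEQ (hσXX.symm.trans h)
  -- new data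
  set σ' := σ * Equiv.swap X p₁ with hσ'def
  have hσ'X : σ' X = Y := by
    rw [hσ'def, Equiv.Perm.mul_apply, Equiv.swap_apply_left, hσp₁]
  have hσ'p₁ : σ' p₁ = σ X := by
    rw [hσ'def, Equiv.Perm.mul_apply, Equiv.swap_apply_right]
  have hσ'ne : ∀ p, p ≠ X → p ≠ p₁ → σ' p = σ p := by
    intro p h1 h2
    rw [hσ'def, Equiv.Perm.mul_apply, Equiv.swap_apply_of_ne_of_ne h1 h2]
  set vp := ((w' p₁ * ω⁻¹) * w' X) with hvpdef
  set w'' := Function.update (Function.update w' X ω) p₁ vp with hw''def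
  have hw''X : w'' X = ω := by
    rw [hw''def, Function.update_of_ne hXp₁, Function.update_self]
  have hw''p₁ : w'' p₁ = vp := by
    rw [hw''def, Function.update_self]
  have hw''ne : ∀ p, p ≠ X → p ≠ p₁ → w'' p = w' p := by
    intro p h1 h2
    rw [hw''def, Function.update_of_ne h2, Function.update_of_ne h1]
  set g' : Fin n → FreeGroup (Fin n) :=
    fun p => if EQ a b t p Y then ((g X * ω) * (g Y)⁻¹) * g p else g p with hg'def
  have hg'Y : ∀ p, EQ a b t p Y → g' p = ((g X * ω) * (g Y)⁻¹) * g p := by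
    intro p hp
    rw [hg'def]
    exact if_pos hp
  have hg'N : ∀ p, ¬ EQ a b t p Y → g' p = g p := by
    intro p hp
    rw [hg'def]
    exact if_neg hp
  -- membership facts
  have hEQ'XY : EQ a b (t+1) X Y :=
    (hedge X Y).2 (Or.inr (Or.inl ⟨Relation.EqvGen.refl _, Relation.EqvGen.refl _⟩))
  have hmem : ∀ z, EQ a b (t+1) z X ↔ (EQ a b t z X ∨ EQ a b t z Y) := by
    intro z
    rw [hedge]
    constructor
    · rintro (h | ⟨h1, h2⟩ | ⟨h1, h2⟩)
      · exact Or.inl h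
      · exact Or.inl h1
      · exact Or.inr h1
    · rintro (h | h)
      · exact Or.inl h
      · exact Or.inr (Or.inr ⟨h, Relation.EqvGen.refl _⟩)
  -- the walk in the new system within the X-component
  have walkNewX : ∀ z, EQ a b t z X → z ≠ X →
      cj z X ((g z)⁻¹ * g X) ∈ NC (cycSet σ' w'') ∧ Reach σ' z X := by
    intro z hzX hzne
    have hznon : ¬ isol a b t z := by
      intro hiso
      exact hzne (isol_class hiso X hzX).symm
    have hXnon : ¬ isol a b t X := by
      intro hiso
      exact hzne (isol_class hiso z hzX.symm)
    have hzuns : eC a b t z < vC a b t z := by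
      rwa [eC_class_inv hzX.symm, vC_class_inv hzX.symm] at hXuns
    obtain ⟨k, hk, hmin⟩ := reach_find (inv.cyc z X hzuns hznon hXnon hzX)
    have havoid : ∀ j, j < k → (σ ^ j) z ≠ X ∧ (σ ^ j) z ≠ p₁ := by
      intro j hj
      constructor
      · exact hmin j hj
      · intro e
        apply hnEQ
        have h1 : EQ a b t z ((σ ^ j) z) := EQ_pow inv.comp z j
        exact (hzX.symm.trans (h1.trans (e ▸ hp₁Y)))
    have htraj : ∀ j, j ≤ k → (σ' ^ j) z = (σ ^ j) z := by
      rw [hσ'def]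
      exact pow_mul_swap_eq havoid
    constructor
    · have hwalk := walk (σ := σ') (w' := w'') (g := g) (x := z) k ?_
      · rwa [htraj k le_rfl, hk] at hwalk
      · intro j hj
        rw [htraj j (Nat.le_of_lt hj), htraj (j+1) hj]
        have ⟨h1, h2⟩ := havoid j hj
        rw [hw''ne _ h1 h2]
        rw [pow_succ_apply]
        apply inv.pot
        have hclass : EQ a b t z ((σ ^ j) z) := EQ_pow inv.comp z j
        rwa [eC_class_inv (hzX.symm.trans hclass), vC_class_inv (hzX.symm.trans hclass)]
          at hXuns
    · exact ⟨k, by rw [htraj k le_rfl, hk]⟩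
  have walkNewσX : cj (σ X) X ((g (σ X))⁻¹ * g X) ∈ NC (cycSet σ' w'') ∧
      Reach σ' (σ X) X := by
    by_cases hfix : σ X = X
    · constructor
      · rw [hfix]
        have : cj X X ((g X)⁻¹ * g X) = 1 := by
          rw [inv_mul_cancel]
          exact cj_self X
        rw [this]
        exact one_mem _
      · rw [hfix]
        exact Reach.refl σ' X
    · exact walkNewX (σ X) hσXX hfix
  have hpotX : w' X = (g X)⁻¹ * g (σ X) := inv.pot X hXuns
  -- forward derivations
  have fwdX : cj X (σ' X) (w'' X) ∈ NC (cycSet σ w' ∪ {cj X Y ω}) := by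
    rw [hσ'X, hw''X]
    exact Subgroup.subset_normalClosure (Or.inr rfl)
  have oldAtp₁ : cj p₁ Y (w' p₁) ∈ NC (cycSet σ w' ∪ {cj X Y ω}) := by
    have : cj p₁ (σ p₁) (w' p₁) ∈ NC (cycSet σ w' ∪ {cj X Y ω}) :=
      Subgroup.subset_normalClosure (Or.inl ⟨p₁, rfl⟩)
    rwa [hσp₁] at this
  have oldAtX : cj X (σ X) (w' X) ∈ NC (cycSet σ w' ∪ {cj X Y ω}) :=
    Subgroup.subset_normalClosure (Or.inl ⟨X, rfl⟩)
  have flipρ : cj Y X ω⁻¹ ∈ NC (cycSet σ w' ∪ {cj X Y ω}) :=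
    ncl_flip (Subgroup.subset_normalClosure (Or.inr rfl))
  have fwdp₁ : cj p₁ (σ' p₁) (w'' p₁) ∈ NC (cycSet σ w' ∪ {cj X Y ω}) := by
    rw [hσ'p₁, hw''p₁, hvpdef]
    exact ncl_trans (ncl_trans oldAtp₁ flipρ) oldAtX
  -- backward derivations
  have newAtX : cj X Y ω ∈ NC (cycSet σ' w'') := by
    have : cj X (σ' X) (w'' X) ∈ NC (cycSet σ' w'') :=
      Subgroup.subset_normalClosure ⟨X, rfl⟩
    rwa [hσ'X, hw''X] at this
  have newAtp₁ : cj p₁ (σ X) vp ∈ NC (cycSet σ' w'') := by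
    have : cj p₁ (σ' p₁) (w'' p₁) ∈ NC (cycSet σ' w'') :=
      Subgroup.subset_normalClosure ⟨p₁, rfl⟩
    rwa [hσ'p₁, hw''p₁] at this
  have bwdX : cj X (σ X) (w' X) ∈ NC (cycSet σ' w'') := by
    have flipped := ncl_flip walkNewσX.1
    have hword : (((g (σ X))⁻¹ * g X)⁻¹) = (g X)⁻¹ * g (σ X) := by group
    rw [hword, ← hpotX] at flipped
    exact flipped
  have bwdp₁ : cj p₁ (σ p₁) (w' p₁) ∈ NC (cycSet σ' w'') := by
    have comb := ncl_trans (ncl_trans newAtp₁ walkNewσX.1) newAtX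
    have hword : ((vp * ((g (σ X))⁻¹ * g X)) * ω) = w' p₁ := by
      rw [hvpdef, hpotX]; group
    rw [hword] at comb
    rw [hσp₁]
    exact comb
  -- closure equality
  have hncl : NC (cycSet σ' w'') = NC (pRels a b w (t+1)) := by
    rw [hrels, ← ncl_union_congr inv.ncl]
    apply cyc_ncl_eq {cj X Y ω} {X, p₁}
    · intro p hp
      simp only [Set.mem_insert_iff, Set.mem_singleton_iff, not_or] at hp
      exact ⟨hσ'ne p hp.1 hp.2, hw''ne p hp.1 hp.2⟩
    · intro p hp
      simp only [Set.mem_insert_iff, Set.mem_singleton_iff] at hp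
      rcases hp with rfl | rfl
      · exact fwdX
      · exact fwdp₁
    · intro p hp
      simp only [Set.mem_insert_iff, Set.mem_singleton_iff] at hp
      rcases hp with rfl | rfl
      · exact bwdX
      · exact bwdp₁
    · intro r hr
      rw [Set.mem_singleton_iff] at hr
      subst hr
      exact newAtX
  refine ⟨σ', w'', g', hncl, ?_, ?_, ?_, ?_⟩
  · -- isolFix
    intro p hp
    rw [hisol] at hp
    obtain ⟨hp1, hp2, hp3⟩ := hp
    have hpne : p ≠ p₁ := by
      rintro rfl
      exact hp₁non hp1
    rw [hσ'ne p hp2 hpne, hw''ne p hp2 hpne]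
    exact inv.isolFix p hp1
  · -- comp
    intro p
    by_cases hpX : p = X
    · subst hpX
      rw [hσ'X]
      exact hEQ'XY
    by_cases hpp₁ : p = p₁
    · subst hpp₁
      rw [hσ'p₁]
      refine Relation.EqvGen.trans _ _ _ ((hedge _ _).2 (Or.inl hp₁Y)) ?_
      exact Relation.EqvGen.trans _ _ _ hEQ'XY.symm ((hedge _ _).2 (Or.inl (inv.comp X)))
    · rw [hσ'ne p hpX hpp₁]
      exact (hedge _ _).2 (Or.inl (inv.comp p))
  · -- pot
    intro p hpuns
    by_cases hpY : EQ a b t p Y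
    · -- in the Y-side component
      have hYuns : eC a b t Y < vC a b t Y := by
        obtain ⟨he, hv⟩ := hmerge_cnt p (Or.inr hpY)
        have := hconn X
        omega
      have hpne : p ≠ X := by
        rintro rfl
        exact hnEQ hpY
      by_cases hpp₁ : p = p₁
      · subst hpp₁
        rw [hσ'p₁, hw''p₁, hvpdef, hg'Y p₁ hp₁Y, hg'N (σ X) hσXnY]
        have hpot₁ : w' p₁ = (g p₁)⁻¹ * g Y := by
          have h := inv.pot p₁ (by
            rwa [eC_class_inv hp₁Y.symm, vC_class_inv hp₁Y.symm] at hYuns)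
          rwa [hσp₁] at h
        rw [hpot₁, hpotX]
        group
      · have hσpY : EQ a b t (σ p) Y := (inv.comp p).symm.trans hpY
        rw [hσ'ne p hpne hpp₁, hw''ne p hpne hpp₁, hg'Y p hpY, hg'Y (σ p) hσpY]
        have hpot := inv.pot p (by
          rwa [eC_class_inv hpY.symm, vC_class_inv hpY.symm] at hYuns)
        rw [hpot]
        group
    by_cases hpX : EQ a b t p X
    · -- in the X-side component
      have hpuns' : eC a b t p < vC a b t p := by
        rwa [eC_class_inv hpX.symm, vC_class_inv hpX.symm] at hXuns
      by_cases hpXeq : p = X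
      · subst hpXeq
        rw [hσ'X, hw''X, hg'N p hpY, hg'Y Y (Relation.EqvGen.refl _)]
        group
      · have hpp₁ : p ≠ p₁ := by
          rintro rfl
          exact hpY hp₁Y
        have hσpY : ¬ EQ a b t (σ p) Y := fun h => hpY ((inv.comp p).trans h)
        rw [hσ'ne p hpXeq hpp₁, hw''ne p hpXeq hpp₁, hg'N p hpY, hg'N (σ p) hσpY]
        exact inv.pot p hpuns'
    · -- far
      obtain ⟨he, hv⟩ := hfar p hpX hpY
      rw [he, hv] at hpuns
      have hpne : p ≠ X := by rintro rfl; exact hpX (Relation.EqvGen.refl _)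
      have hpp₁ : p ≠ p₁ := by rintro rfl; exact hpY hp₁Y
      have hσpY : ¬ EQ a b t (σ p) Y := fun h => hpY ((inv.comp p).trans h)
      rw [hσ'ne p hpne hpp₁, hw''ne p hpne hpp₁, hg'N p hpY, hg'N (σ p) hσpY]
      exact inv.pot p hpuns
  · -- cyc
    intro p p' hpuns hpn hpn' hpp'
    by_cases hin : EQ a b (t+1) p X
    · -- merged component
      have hYuns : eC a b t Y < vC a b t Y := by
        obtain ⟨he, hv⟩ := hmerge_cnt p ((hmem p).1 hin)
        have := hconn X
        omega
      have hp'in : EQ a b (t+1) p' X := (Relation.EqvGen.symm _ _ hpp').trans _ _ _ hin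
      have RX : ∀ z, ¬ isol a b (t+1) z → EQ a b (t+1) z X → Reach σ' z X := by
        intro z hz hzX
        rcases (hmem z).1 hzX with hzX' | hzY'
        · by_cases hzeq : z = X
          · subst hzeq; exact Reach.refl σ' z
          · exact (walkNewX z hzX' hzeq).2
        · -- z in Y-side
          have hzne : z ≠ X := by
            rintro rfl
            exact hnEQ hzY'
          have hznon : ¬ isol a b t z := by
            intro hiso
            exact hYnon ((isol_class hiso Y hzY') ▸ hiso)
          have hzuns : eC a b t z < vC a b t z := by
            rwa [eC_class_inv hzY'.symm, vC_class_inv hzY'.symm] at hYuns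
          obtain ⟨k, hk, hmin⟩ :=
            reach_find (inv.cyc z p₁ hzuns hznon hp₁non (hzY'.trans hp₁Y.symm))
          have havoid : ∀ j, j < k → (σ ^ j) z ≠ X ∧ (σ ^ j) z ≠ p₁ := by
            intro j hj
            have hclass : EQ a b t z ((σ ^ j) z) := EQ_pow inv.comp z j
            constructor
            · intro e
              exact hnEQ (((e ▸ hclass).symm.trans hzY' : EQ a b t X Y))
            · exact hmin j hj
          have hr1 : Reach σ' z p₁ := by
            rw [hσ'def]
            exact reach_mul_swap hk havoid
          have hr2 : Reach σ' p₁ (σ X) := by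
            have := Reach.step σ' p₁
            rwa [hσ'p₁] at this
          exact (hr1.trans hr2).trans walkNewσX.2
      have := (RX p hpn hin).trans (RX p' hpn' hp'in).symm
      exact this
    · -- outside merged component
      have hpX : ¬ EQ a b t p X := fun h => hin ((hmem p).2 (Or.inl h))
      have hpY : ¬ EQ a b t p Y := fun h => hin ((hmem p).2 (Or.inr h))
      obtain ⟨he, hv⟩ := hfar p hpX hpY
      rw [he, hv] at hpuns
      have hppt : EQ a b t p p' := by
        rcases (hedge p p').1 hpp' with h | ⟨h1, h2⟩ | ⟨h1, h2⟩
        · exact h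
        · exact absurd h1 hpX
        · exact absurd h1 hpY
      have hpnt : ¬ isol a b t p := by
        intro hiso
        apply hpn
        rw [hisol]
        exact ⟨hiso, fun e => hpX (e ▸ Relation.EqvGen.refl _), fun e => hpY (e ▸ Relation.EqvGen.refl _)⟩
      have hpnt' : ¬ isol a b t p' := by
        intro hiso
        apply hpn'
        rw [hisol]
        constructor
        · exact hiso
        constructor
        · rintro rfl
          exact hpX hppt
        · rintro rfl
          exact hpY hppt
      obtain ⟨k, hk⟩ := inv.cyc p p' hpuns hpnt hpnt' hppt
      rw [hσ'def]
      apply reach_mul_swap hk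
      intro j hj
      have hclass : EQ a b t p ((σ ^ j) p) := EQ_pow inv.comp p j
      constructor
      · intro e
        exact hpX (hclass.trans (e ▸ Relation.EqvGen.refl _))
      · intro e
        exact hpY (hclass.trans (e ▸ hp₁Y))

/-- New loop at an isolated vertex. -/
lemma stepLoop {t : ℕ} {σ : Equiv.Perm (Fin n)} {w' g : Fin n → FreeGroup (Fin n)}
    {X : Fin n} {ω : FreeGroup (Fin n)}
    (inv : Inv a b w t σ w' g)
    (hrels : NC (pRels a b w (t+1)) = NC (pRels a b w t ∪ {cj X X ω}))
    (hedge : ∀ x y, EQ a b (t+1) x y ↔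
      (EQ a b t x y ∨ (EQ a b t x X ∧ EQ a b t X y) ∨ (EQ a b t x X ∧ EQ a b t X y)))
    (hisol : ∀ p, isol a b (t+1) p ↔ (isol a b t p ∧ p ≠ X))
    (hXiso : isol a b t X)
    (hfar : ∀ p, ¬ EQ a b t p X → ¬ EQ a b t p X →
      eC a b (t+1) p = eC a b t p ∧ vC a b (t+1) p = vC a b t p)
    (hX_cnt : eC a b (t+1) X = 1 ∧ vC a b (t+1) X = 1) :
    ∃ (σ' : Equiv.Perm (Fin n)) (w'' g' : Fin n → FreeGroup (Fin n)),
      Inv a b w (t+1) σ' w'' g' := by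
  classical
  obtain ⟨hfixX, hw'X⟩ := inv.isolFix X hXiso
  set w'' := Function.update w' X ω with hw''def
  have hw''X : w'' X = ω := Function.update_self X ω w'
  have hw''ne : ∀ p, p ≠ X → w'' p = w' p := fun p hp => Function.update_of_ne hp ω w'
  -- class of X at t+1 is {X}
  have hclsX : ∀ z, EQ a b (t+1) z X → z = X := by
    intro z hz
    rcases (hedge z X).1 hz with h | ⟨h1, h2⟩ | ⟨h1, h2⟩
    · exact (isol_class hXiso z h.symm)
    · exact (isol_class hXiso z h1.symm)
    · exact (isol_class hXiso z h1.symm)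
  have hEQfar : ∀ p x, ¬ EQ a b t p X → (EQ a b (t+1) p x ↔ EQ a b t p x) := by
    intro p x hp
    rw [hedge]
    constructor
    · rintro (h | ⟨h1, h2⟩ | ⟨h1, h2⟩)
      · exact h
      · exact absurd h1 hp
      · exact absurd h1 hp
    · exact Or.inl
  have hncl : NC (cycSet σ w'') = NC (pRels a b w (t+1)) := by
    rw [hrels, ← ncl_union_congr inv.ncl]
    apply cyc_ncl_eq {cj X X ω} {X}
    · intro p hp
      exact ⟨rfl, hw''ne p (by simpa using hp)⟩
    · intro p hp
      rw [Set.mem_singleton_iff] at hp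
      subst hp
      rw [hfixX, hw''X]
      exact Subgroup.subset_normalClosure (Or.inr rfl)
    · intro p hp
      rw [Set.mem_singleton_iff] at hp
      subst hp
      rw [hfixX, hw'X, cj_self]
      exact one_mem _
    · intro r hr
      rw [Set.mem_singleton_iff] at hr
      subst hr
      have : cj X (σ X) (w'' X) ∈ NC (cycSet σ w'') :=
        Subgroup.subset_normalClosure ⟨X, rfl⟩
      rwa [hfixX, hw''X] at this
  refine ⟨σ, w'', g, hncl, ?_, ?_, ?_, ?_⟩
  · intro p hp
    rw [hisol] at hp
    rw [hw''ne p hp.2]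
    exact inv.isolFix p hp.1
  · intro p
    exact (hedge _ _).2 (Or.inl (inv.comp p))
  · intro p hpuns
    by_cases hpX : EQ a b t p X
    · exfalso
      have hpeq : p = X := isol_class hXiso p hpX.symm
      subst hpeq
      omega
    · obtain ⟨he, hv⟩ := hfar p hpX hpX
      rw [he, hv] at hpuns
      rw [hw''ne p (fun e => hpX (e ▸ Relation.EqvGen.refl _))]
      exact inv.pot p hpuns
  · intro p p' hpuns hpn hpn' hpp'
    by_cases hpX : EQ a b t p X
    · exfalso
      have hpeq : p = X := isol_class hXiso p hpX.symm
      subst hpeq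
      omega
    · obtain ⟨he, hv⟩ := hfar p hpX hpX
      rw [he, hv] at hpuns
      have hp'X : ¬ EQ a b t p' X := by
        intro h
        exact hpX (((hEQfar p p' hpX).1 hpp').trans h)
      have hppt : EQ a b t p p' := (hEQfar p p' hpX).1 hpp'
      have hpnt : ¬ isol a b t p := by
        intro hiso
        apply hpn
        rw [hisol]
        exact ⟨hiso, fun e => hpX (e ▸ Relation.EqvGen.refl _)⟩
      have hpnt' : ¬ isol a b t p' := by
        intro hiso
        apply hpn'
        rw [hisol]
        exact ⟨hiso, fun e => hp'X (e ▸ Relation.EqvGen.refl _)⟩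
      exact inv.cyc p p' hpuns hpnt hpnt' hppt

/-- New edge between two distinct isolated vertices. -/
lemma stepPair {t : ℕ} {σ : Equiv.Perm (Fin n)} {w' g : Fin n → FreeGroup (Fin n)}
    {X Y : Fin n} {ω : FreeGroup (Fin n)}
    (inv : Inv a b w t σ w' g)
    (hrels : NC (pRels a b w (t+1)) = NC (pRels a b w t ∪ {cj X Y ω}))
    (hedge : ∀ x y, EQ a b (t+1) x y ↔
      (EQ a b t x y ∨ (EQ a b t x X ∧ EQ a b t Y y) ∨ (EQ a b t x Y ∧ EQ a b t X y)))
    (hisol : ∀ p, isol a b (t+1) p ↔ (isol a b t p ∧ p ≠ X ∧ p ≠ Y))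
    (hXiso : isol a b t X) (hYiso : isol a b t Y) (hne : X ≠ Y)
    (hfar : ∀ p, ¬ EQ a b t p X → ¬ EQ a b t p Y →
      eC a b (t+1) p = eC a b t p ∧ vC a b (t+1) p = vC a b t p) :
    ∃ (σ' : Equiv.Perm (Fin n)) (w'' g' : Fin n → FreeGroup (Fin n)),
      Inv a b w (t+1) σ' w'' g' := by
  classical
  obtain ⟨hfixX, hw'X⟩ := inv.isolFix X hXiso
  obtain ⟨hfixY, hw'Y⟩ := inv.isolFix Y hYiso
  set σ' := σ * Equiv.swap X Y with hσ'def
  have hσ'X : σ' X = Y := by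
    rw [hσ'def, Equiv.Perm.mul_apply, Equiv.swap_apply_left, hfixY]
  have hσ'Y : σ' Y = X := by
    rw [hσ'def, Equiv.Perm.mul_apply, Equiv.swap_apply_right, hfixX]
  have hσ'ne : ∀ p, p ≠ X → p ≠ Y → σ' p = σ p := by
    intro p h1 h2
    rw [hσ'def, Equiv.Perm.mul_apply, Equiv.swap_apply_of_ne_of_ne h1 h2]
  set w'' := Function.update (Function.update w' X ω) Y ω⁻¹ with hw''def
  have hw''X : w'' X = ω := by
    rw [hw''def, Function.update_of_ne hne, Function.update_self]
  have hw''Y : w'' Y = ω⁻¹ := by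
    rw [hw''def, Function.update_self]
  have hw''ne : ∀ p, p ≠ X → p ≠ Y → w'' p = w' p := by
    intro p h1 h2
    rw [hw''def, Function.update_of_ne h2, Function.update_of_ne h1]
  set g' := Function.update g Y (g X * ω) with hg'def
  have hg'Y : g' Y = g X * ω := Function.update_self Y (g X * ω) g
  have hg'ne : ∀ p, p ≠ Y → g' p = g p := fun p hp => Function.update_of_ne hp (g X * ω) g
  have hEQ'XY : EQ a b (t+1) X Y :=
    (hedge X Y).2 (Or.inr (Or.inl ⟨Relation.EqvGen.refl _, Relation.EqvGen.refl _⟩))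
  have hmem : ∀ z, EQ a b (t+1) z X → (z = X ∨ z = Y) := by
    intro z hz
    rcases (hedge z X).1 hz with h | ⟨h1, h2⟩ | ⟨h1, h2⟩
    · exact Or.inl (isol_class hXiso z h.symm)
    · exact Or.inl (isol_class hXiso z h1.symm)
    · exact Or.inr (isol_class hYiso z h1.symm)
  have hEQfar : ∀ p x, ¬ EQ a b t p X → ¬ EQ a b t p Y → (EQ a b (t+1) p x ↔ EQ a b t p x) := by
    intro p x h1 h2
    rw [hedge]
    constructor
    · rintro (h | ⟨ha, hb⟩ | ⟨ha, hb⟩)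
      · exact h
      · exact absurd ha h1
      · exact absurd ha h2
    · exact Or.inl
  have hncl : NC (cycSet σ' w'') = NC (pRels a b w (t+1)) := by
    rw [hrels, ← ncl_union_congr inv.ncl]
    apply cyc_ncl_eq {cj X Y ω} {X, Y}
    · intro p hp
      simp only [Set.mem_insert_iff, Set.mem_singleton_iff, not_or] at hp
      exact ⟨hσ'ne p hp.1 hp.2, hw''ne p hp.1 hp.2⟩
    · intro p hp
      simp only [Set.mem_insert_iff, Set.mem_singleton_iff] at hp
      rcases hp with rfl | rfl
      · rw [hσ'X, hw''X]
        exact Subgroup.subset_normalClosure (Or.inr rfl)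
      · rw [hσ'Y, hw''Y]
        exact ncl_flip (Subgroup.subset_normalClosure (Or.inr rfl))
    · intro p hp
      simp only [Set.mem_insert_iff, Set.mem_singleton_iff] at hp
      rcases hp with rfl | rfl
      · rw [hfixX, hw'X, cj_self]
        exact one_mem _
      · rw [hfixY, hw'Y, cj_self]
        exact one_mem _
    · intro r hr
      rw [Set.mem_singleton_iff] at hr
      subst hr
      have : cj X (σ' X) (w'' X) ∈ NC (cycSet σ' w'') :=
        Subgroup.subset_normalClosure ⟨X, rfl⟩
      rwa [hσ'X, hw''X] at this
  refine ⟨σ', w'', g', hncl, ?_, ?_, ?_, ?_⟩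
  · intro p hp
    rw [hisol] at hp
    obtain ⟨hp1, hp2, hp3⟩ := hp
    rw [hσ'ne p hp2 hp3, hw''ne p hp2 hp3]
    exact inv.isolFix p hp1
  · intro p
    by_cases hpX : p = X
    · subst hpX; rw [hσ'X]; exact hEQ'XY
    by_cases hpY : p = Y
    · subst hpY; rw [hσ'Y]; exact hEQ'XY.symm
    · rw [hσ'ne p hpX hpY]
      exact (hedge _ _).2 (Or.inl (inv.comp p))
  · intro p hpuns
    by_cases hpX : p = X
    · subst hpX
      rw [hσ'X, hw''X, hg'ne p hne, hg'Y]
      group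
    by_cases hpY : p = Y
    · subst hpY
      rw [hσ'Y, hw''Y, hg'Y, hg'ne X hne]
      group
    · have h1 : ¬ EQ a b t p X := fun h => hpX (isol_class hXiso p h.symm)
      have h2 : ¬ EQ a b t p Y := fun h => hpY (isol_class hYiso p h.symm)
      obtain ⟨he, hv⟩ := hfar p h1 h2
      rw [he, hv] at hpuns
      have hσpY : σ p ≠ Y := by
        intro e
        exact h2 (e ▸ inv.comp p)
      rw [hσ'ne p hpX hpY, hw''ne p hpX hpY, hg'ne p hpY, hg'ne (σ p) hσpY]
      exact inv.pot p hpuns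
  · intro p p' hpuns hpn hpn' hpp'
    by_cases hin : EQ a b (t+1) p X
    · have hp'in : EQ a b (t+1) p' X := (Relation.EqvGen.symm _ _ hpp').trans _ _ _ hin
      have hR : ∀ z, EQ a b (t+1) z X → Reach σ' z X := by
        intro z hz
        rcases hmem z hz with rfl | rfl
        · exact Reach.refl σ' z
        · exact ⟨1, by simpa using hσ'Y⟩
      exact (hR p hin).trans (hR p' hp'in).symm
    · have h1 : ¬ EQ a b t p X := fun h => hin ((hedge p X).2 (Or.inl h))
      have h2 : ¬ EQ a b t p Y := fun h =>
        hin ((hedge p X).2 (Or.inr (Or.inr ⟨h, Relation.EqvGen.refl _⟩)))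
      obtain ⟨he, hv⟩ := hfar p h1 h2
      rw [he, hv] at hpuns
      have hppt : EQ a b t p p' := (hEQfar p p' h1 h2).1 hpp'
      have hpnt : ¬ isol a b t p := by
        intro hiso
        apply hpn
        rw [hisol]
        exact ⟨hiso, fun e => h1 (e ▸ Relation.EqvGen.refl _),
          fun e => h2 (e ▸ Relation.EqvGen.refl _)⟩
      have hpnt' : ¬ isol a b t p' := by
        intro hiso
        apply hpn'
        rw [hisol]
        refine ⟨hiso, ?_, ?_⟩
        · rintro rfl
          exact h1 hppt
        · rintro rfl
          exact h2 hppt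
      obtain ⟨k, hk⟩ := inv.cyc p p' hpuns hpnt hpnt' hppt
      rw [hσ'def]
      apply reach_mul_swap hk
      intro j hj
      have hclass : EQ a b t p ((σ ^ j) p) := EQ_pow inv.comp p j
      exact ⟨fun e => h1 (hclass.trans (e ▸ Relation.EqvGen.refl _)),
        fun e => h2 (hclass.trans (e ▸ Relation.EqvGen.refl _))⟩

lemma isol_succ {t : ℕ} (ht : t < s) (p : Fin n) :
    isol a b (t+1) p ↔ (isol a b t p ∧ p ≠ a ⟨t, ht⟩ ∧ p ≠ b ⟨t, ht⟩) := by
  constructor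
  · intro h
    refine ⟨fun q hq => h q (Nat.lt_succ_of_lt hq), ?_, ?_⟩
    · exact fun e => (h ⟨t, ht⟩ (Nat.lt_succ_self t)).1 e.symm
    · exact fun e => (h ⟨t, ht⟩ (Nat.lt_succ_self t)).2 e.symm
  · rintro ⟨h1, h2, h3⟩ q hq
    rcases Nat.lt_succ_iff_lt_or_eq.1 hq with hq' | hq'
    · exact h1 q hq'
    · have : q = ⟨t, ht⟩ := Fin.ext hq'
      subst this
      exact ⟨fun e => h2 e.symm, fun e => h3 e.symm⟩

lemma inv_base : ∃ (σ : Equiv.Perm (Fin n)) (w' g : Fin n → FreeGroup (Fin n)),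
    Inv a b w 0 σ w' g := by
  refine ⟨1, fun _ => 1, fun _ => 1, ?_, ?_, ?_, ?_, ?_⟩
  · rw [pRels_zero]
    apply ncl_eq_of
    · rintro r ⟨q, rfl⟩
      have : cj q ((1 : Equiv.Perm (Fin n)) q) 1 = 1 := by
        rw [Equiv.Perm.one_apply]
        exact cj_self q
      rw [this]
      exact one_mem _
    · rintro r hr
      exact absurd hr (Set.notMem_empty r)
  · intro p _
    exact ⟨rfl, rfl⟩
  · intro p
    rw [Equiv.Perm.one_apply]
    exact Relation.EqvGen.refl p
  · intro p _
    group
  · intro p p' _ _ _ h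
    rw [EQ_zero h]
    exact Reach.refl 1 p'

lemma buildInv (heul : ∀ i : Fin n, eC a b s i ≤ vC a b s i) :
    ∀ t : ℕ, t ≤ s → ∃ (σ : Equiv.Perm (Fin n)) (w' g : Fin n → FreeGroup (Fin n)),
      Inv a b w t σ w' g := by
  intro t
  induction t with
  | zero => exact fun _ => inv_base
  | succ t ih =>
    intro hts
    have ht : t < s := Nat.lt_of_succ_le hts
    obtain ⟨σ, w', g, inv⟩ := ih (Nat.le_of_lt ht)
    have hrels0 : NC (pRels a b w (t+1)) = NC (pRels a b w t ∪ {cj (b ⟨t, ht⟩) (a ⟨t, ht⟩) (w ⟨t, ht⟩)}) := by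
      rw [pRels_succ a b w ht]
    have hedgeAB : ∀ x y, EQ a b (t+1) x y ↔
        (EQ a b t x y ∨ (EQ a b t x (a ⟨t, ht⟩) ∧ EQ a b t (b ⟨t, ht⟩) y) ∨ (EQ a b t x (b ⟨t, ht⟩) ∧ EQ a b t (a ⟨t, ht⟩) y)) :=
      fun x y => EQ_succ_iff ht
    have hedgeBA : ∀ x y, EQ a b (t+1) x y ↔
        (EQ a b t x y ∨ (EQ a b t x (b ⟨t, ht⟩) ∧ EQ a b t (a ⟨t, ht⟩) y) ∨ (EQ a b t x (a ⟨t, ht⟩) ∧ EQ a b t (b ⟨t, ht⟩) y)) := by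
      intro x y
      rw [hedgeAB]
      tauto
    have hisolAB : ∀ p, isol a b (t+1) p ↔ (isol a b t p ∧ p ≠ (a ⟨t, ht⟩) ∧ p ≠ (b ⟨t, ht⟩)) :=
      fun p => isol_succ ht p
    have hisolBA : ∀ p, isol a b (t+1) p ↔ (isol a b t p ∧ p ≠ (b ⟨t, ht⟩) ∧ p ≠ (a ⟨t, ht⟩)) := by
      intro p
      rw [hisolAB]
      tauto
    have hfarAB : ∀ p, ¬ EQ a b t p (a ⟨t, ht⟩) → ¬ EQ a b t p (b ⟨t, ht⟩) →
        eC a b (t+1) p = eC a b t p ∧ vC a b (t+1) p = vC a b t p :=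
      fun p h1 h2 => ⟨(far_counts ht h1 h2).2, (far_counts ht h1 h2).1⟩
    have hfarBA : ∀ p, ¬ EQ a b t p (b ⟨t, ht⟩) → ¬ EQ a b t p (a ⟨t, ht⟩) →
        eC a b (t+1) p = eC a b t p ∧ vC a b (t+1) p = vC a b t p :=
      fun p h1 h2 => ⟨(far_counts ht h2 h1).2, (far_counts ht h2 h1).1⟩
    have hconn : ∀ i, vC a b t i ≤ eC a b t i + 1 :=
      fun i => conn (a := a) (b := b) t (Nat.le_of_lt ht) i
    have heul' : ∀ i, eC a b (t+1) i ≤ vC a b (t+1) i :=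
      fun i => prefix_euler heul (t+1) hts i
    by_cases hBi : isol a b t (b ⟨t, ht⟩)
    · by_cases hAi : isol a b t (a ⟨t, ht⟩)
      · by_cases hABeq : (b ⟨t, ht⟩) = (a ⟨t, ht⟩)
        · -- loop at isolated vertex
          apply stepLoop (X := (a ⟨t, ht⟩)) (ω := w ⟨t, ht⟩) inv
          · rw [hrels0, hABeq]
          · intro x y
            rw [hedgeAB x y, hABeq]
          · intro p
            rw [hisolAB p, hABeq]
            exact ⟨fun h => ⟨h.1, h.2.1⟩, fun h => ⟨h.1, h.2, h.2⟩⟩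
          · exact hAi
          · intro p h1 _
            exact hfarAB p h1 (by rwa [hABeq])
          · have hEQab : EQ a b t (a ⟨t, ht⟩) (b ⟨t, ht⟩) := by rw [hABeq]; exact Relation.EqvGen.refl (a ⟨t, ht⟩)
            obtain ⟨hv, he⟩ := same_counts ht hEQab (Relation.EqvGen.refl (a ⟨t, ht⟩))
            have h1 := isol_eC hAi
            have h2 := isol_vC hAi
            omega
        · -- new pair
          apply stepPair (X := (b ⟨t, ht⟩)) (Y := (a ⟨t, ht⟩)) (ω := w ⟨t, ht⟩) inv hrels0 hedgeBA hisolBA hBi hAi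
            hABeq hfarBA
      · -- (b ⟨t, ht⟩) isolated, (a ⟨t, ht⟩) not: insert, source (b ⟨t, ht⟩)
        apply stepMerge (X := (b ⟨t, ht⟩)) (Y := (a ⟨t, ht⟩)) (ω := w ⟨t, ht⟩) inv hrels0 hedgeBA hisolBA hAi
        · intro h
          exact hAi ((isol_class hBi (a ⟨t, ht⟩) h) ▸ hBi)
        · have h1 := isol_eC hBi
          have h2 := isol_vC hBi
          omega
        · exact hfarBA
        · intro i hi
          have hnab : ¬ EQ a b t (a ⟨t, ht⟩) (b ⟨t, ht⟩) := by
            intro h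
            exact hAi ((isol_class hBi (a ⟨t, ht⟩) h.symm) ▸ hBi)
          obtain ⟨hv, he⟩ := merge_counts ht hnab (hi.elim Or.inr Or.inl)
          omega
        · exact hconn
    · by_cases hAi : isol a b t (a ⟨t, ht⟩)
      · -- (a ⟨t, ht⟩) isolated, (b ⟨t, ht⟩) not: insert, source (a ⟨t, ht⟩), flipped relator
        apply stepMerge (X := (a ⟨t, ht⟩)) (Y := (b ⟨t, ht⟩)) (ω := (w ⟨t, ht⟩)⁻¹) inv (hrels0.trans ncl_ins_flip)
          hedgeAB hisolAB hBi
        · intro h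
          exact hBi ((isol_class hAi (b ⟨t, ht⟩) h) ▸ hAi)
        · have h1 := isol_eC hAi
          have h2 := isol_vC hAi
          omega
        · exact hfarAB
        · intro i hi
          have hnab : ¬ EQ a b t (a ⟨t, ht⟩) (b ⟨t, ht⟩) := by
            intro h
            exact hBi ((isol_class hAi (b ⟨t, ht⟩) h) ▸ hAi)
          obtain ⟨hv, he⟩ := merge_counts ht hnab hi
          omega
        · exact hconn
      · -- both non-isolated
        by_cases hEQab : EQ a b t (a ⟨t, ht⟩) (b ⟨t, ht⟩)
        · -- chord
          apply stepChord (X := (b ⟨t, ht⟩)) (Y := (a ⟨t, ht⟩)) (ω := w ⟨t, ht⟩) inv hrels0 hedgeBA hisolBA hBi hAi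
            hEQab.symm
          · obtain ⟨hv, he⟩ := same_counts ht hEQab hEQab.symm
            have := heul' (b ⟨t, ht⟩)
            omega
          · exact hfarBA
          · intro i hi
            obtain ⟨hv, he⟩ := same_counts ht hEQab (hi.trans hEQab.symm)
            exact ⟨he, hv⟩
          · exact hconn
        · by_cases hBuns : eC a b t (b ⟨t, ht⟩) < vC a b t (b ⟨t, ht⟩)
          · apply stepMerge (X := (b ⟨t, ht⟩)) (Y := (a ⟨t, ht⟩)) (ω := w ⟨t, ht⟩) inv hrels0 hedgeBA hisolBA hAi
              (fun h => hEQab h.symm) hBuns hfarBA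
            · intro i hi
              obtain ⟨hv, he⟩ := merge_counts ht hEQab (hi.elim Or.inr Or.inl)
              omega
            · exact hconn
          · have hAuns : eC a b t (a ⟨t, ht⟩) < vC a b t (a ⟨t, ht⟩) := by
              obtain ⟨hv, he⟩ := merge_counts ht hEQab (Or.inl (Relation.EqvGen.refl (a ⟨t, ht⟩)))
              have h1 := heul' (a ⟨t, ht⟩)
              have h2 := hconn (b ⟨t, ht⟩)
              omega
            apply stepMerge (X := (a ⟨t, ht⟩)) (Y := (b ⟨t, ht⟩)) (ω := (w ⟨t, ht⟩)⁻¹) inv (hrels0.trans ncl_ins_flip)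
              hedgeAB hisolAB hBi hEQab hAuns hfarAB
            · intro i hi
              obtain ⟨hv, he⟩ := merge_counts ht hEQab hi
              omega
            · exact hconn

end Steps

end WirtingerAux

theorem wirtinger_to_cyclic_presentation
    (n s : ℕ) (a b : Fin s → Fin n) (w : Fin s → FreeGroup (Fin n))
    (euler : ∀ i : Fin n,
      Nat.card { q : Fin s // Relation.EqvGen (wirtingerEdge n s a b) i (a q) } ≤
        Nat.card { j : Fin n // Relation.EqvGen (wirtingerEdge n s a b) i j }) :
    ∃ (m : ℕ) (σ : Equiv.Perm (Fin m)) (w' : Fin m → FreeGroup (Fin m)),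
      Nonempty (PresentedGroup (wirtingerRels n s a b w) ≃*
        PresentedGroup (cyclicWirtingerRels m σ w')) := by
  classical
  open WirtingerAux in
  have hwe : ∀ x y, pEdge a b s x y ↔ wirtingerEdge n s a b x y := by
    intro x y
    constructor
    · rintro ⟨q, _, h1, h2⟩
      exact ⟨q, h1, h2⟩
    · rintro ⟨q, h1, h2⟩
      exact ⟨q, q.isLt, h1, h2⟩
  have hEQw : ∀ x y, WirtingerAux.EQ a b s x y ↔ Relation.EqvGen (wirtingerEdge n s a b) x y :=
    fun x y => WirtingerAux.eqvgen_congr hwe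
  have heul : ∀ i : Fin n, WirtingerAux.eC a b s i ≤ WirtingerAux.vC a b s i := by
    intro i
    have h := euler i
    have e1 : Nat.card { q : Fin s // Relation.EqvGen (wirtingerEdge n s a b) i (a q) } =
        WirtingerAux.eC a b s i := by
      unfold WirtingerAux.eC WirtingerAux.Eg
      rw [← Nat.card_coe_set_eq]
      apply Nat.card_congr
      apply Equiv.subtypeEquivRight
      intro q
      simp only [Set.mem_setOf_eq]
      constructor
      · intro hq
        exact ⟨q.isLt, (hEQw i (a q)).2 hq⟩
      · intro hq
        exact (hEQw i (a q)).1 hq.2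
    have e2 : Nat.card { j : Fin n // Relation.EqvGen (wirtingerEdge n s a b) i j } =
        WirtingerAux.vC a b s i := by
      unfold WirtingerAux.vC WirtingerAux.Cl
      rw [← Nat.card_coe_set_eq]
      apply Nat.card_congr
      apply Equiv.subtypeEquivRight
      intro j
      simp only [Set.mem_setOf_eq]
      exact (hEQw i j).symm
    omega
  obtain ⟨σ, w', g, inv⟩ := WirtingerAux.buildInv heul s le_rfl
  refine ⟨n, σ, w', ⟨?_⟩⟩
  have h1 : wirtingerRels n s a b w = WirtingerAux.pRels a b w s := by
    ext r
    simp only [wirtingerRels, WirtingerAux.pRels, Set.mem_setOf_eq, WirtingerAux.cj]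
    constructor
    · rintro ⟨q, rfl⟩
      exact ⟨q, q.isLt, rfl⟩
    · rintro ⟨q, _, rfl⟩
      exact ⟨q, rfl⟩
  have h2 : cyclicWirtingerRels n σ w' = WirtingerAux.cycSet σ w' := by
    ext r
    simp only [cyclicWirtingerRels, WirtingerAux.cycSet, Set.mem_setOf_eq, WirtingerAux.cj]
  have hkey : Subgroup.normalClosure (wirtingerRels n s a b w) =
      Subgroup.normalClosure (cyclicWirtingerRels n σ w') := by
    rw [h1, h2]
    exact inv.ncl.symm
  exact QuotientGroup.quotientMulEquivOfEq hkey
end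

section
/- Let G be the group of a Gauss diagram with m arrows, determined by a permutation σ of Fin m, a map t : Fin m → Fin m, and signs ε : Fin m → ℤ with ε q = ±1, where σ has exactly k cycles (orbits). Then: (1) whenever i and j lie in the same orbit of σ, the images in G of the generators x_i and x_j are conjugate; (2) G is the normal closure of the images of k generators, one chosen from each orbit of σ; and (3) the abelianization of G is isomorphic to ℤ^k. -/
/-- The relator set of the group of a Gauss diagram with `m` arrows. -/
def gaussRels (m : ℕ) (σ : Equiv.Perm (Fin m)) (t : Fin m → Fin m) (ε : Fin m → ℤ) :
    Set (FreeGroup (Fin m)) :=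
  { r | ∃ q : Fin m,
      r = (FreeGroup.of (σ q))⁻¹ * (FreeGroup.of (t q)) ^ (-ε q) *
        FreeGroup.of q * (FreeGroup.of (t q)) ^ (ε q) }

theorem gauss_diagram_group_properties
    (m k : ℕ) (σ : Equiv.Perm (Fin m)) (t : Fin m → Fin m) (ε : Fin m → ℤ)
    (hε : ∀ q : Fin m, ε q = 1 ∨ ε q = -1)
    (hk : Nat.card (Quot σ.SameCycle) = k) :
    (∀ i j : Fin m, σ.SameCycle i j →
      IsConj (PresentedGroup.of (rels := gaussRels m σ t ε) i)
        (PresentedGroup.of (rels := gaussRels m σ t ε) j)) ∧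
    (∀ c : Quot σ.SameCycle → Fin m, (∀ x, Quot.mk σ.SameCycle (c x) = x) →
      Subgroup.normalClosure
        (Set.range fun x => PresentedGroup.of (rels := gaussRels m σ t ε) (c x)) = ⊤) ∧
    Nonempty (Abelianization (PresentedGroup (gaussRels m σ t ε)) ≃*
      Multiplicative (Fin k → ℤ)) := by
  classical
  set R := gaussRels m σ t ε with hR
  -- the defining relation in the presented group
  have key : ∀ q : Fin m,
      (PresentedGroup.of (rels := R) (σ q)) =
        (PresentedGroup.of (rels := R) (t q)) ^ (-ε q) * PresentedGroup.of q *
          (PresentedGroup.of (rels := R) (t q)) ^ (ε q) := by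
    intro q
    have hmem : ((FreeGroup.of (σ q))⁻¹ * (FreeGroup.of (t q)) ^ (-ε q) *
        FreeGroup.of q * (FreeGroup.of (t q)) ^ (ε q)) ∈ R := ⟨q, rfl⟩
    have h1 : (PresentedGroup.mk R ((FreeGroup.of (σ q))⁻¹ * (FreeGroup.of (t q)) ^ (-ε q) *
        FreeGroup.of q * (FreeGroup.of (t q)) ^ (ε q))) = 1 :=
      (QuotientGroup.eq_one_iff _).mpr (Subgroup.subset_normalClosure hmem)
    have h2 : (PresentedGroup.of (rels := R) (σ q))⁻¹ *
        ((PresentedGroup.of (rels := R) (t q)) ^ (-ε q) * PresentedGroup.of q *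
          (PresentedGroup.of (rels := R) (t q)) ^ (ε q)) = 1 := by
      simpa [map_mul, map_inv, map_zpow, mul_assoc, PresentedGroup.of] using h1
    exact inv_mul_eq_one.mp h2
  have hconj : ∀ q : Fin m, IsConj (PresentedGroup.of (rels := R) q)
      (PresentedGroup.of (rels := R) (σ q)) := by
    intro q
    refine isConj_iff.mpr ⟨(PresentedGroup.of (rels := R) (t q)) ^ (-ε q), ?_⟩
    rw [key q]
    group
  have part1 : ∀ i j : Fin m, σ.SameCycle i j →
      IsConj (PresentedGroup.of (rels := R) i) (PresentedGroup.of (rels := R) j) := by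
    intro i j h
    obtain ⟨n, -, rfl⟩ := h.exists_pow_eq'
    clear h
    induction n with
    | zero =>
      rw [pow_zero, Equiv.Perm.one_apply]
    | succ n ih =>
      rw [pow_succ', Equiv.Perm.mul_apply]
      exact ih.trans (hconj _)
  have habconj : ∀ a b : PresentedGroup R, IsConj a b →
      Abelianization.of a = Abelianization.of b := by
    intro a b h
    obtain ⟨u, hu⟩ := isConj_iff.mp h
    rw [← hu, map_mul, map_mul, map_inv, mul_right_comm, mul_inv_cancel, one_mul]
  have hsc_of_mk : ∀ i j : Fin m, Quot.mk σ.SameCycle i = Quot.mk σ.SameCycle j →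
      σ.SameCycle i j := fun i j h =>
    (Equiv.Perm.SameCycle.equivalence σ).eqvGen_iff.mp (Quot.eq.mp h)
  refine ⟨part1, ?_, ?_⟩
  · intro c hc
    rw [eq_top_iff, ← PresentedGroup.closure_range_of R]
    refine (Subgroup.closure_le _).mpr ?_
    rintro _ ⟨i, rfl⟩
    have hsc : σ.SameCycle (c (Quot.mk σ.SameCycle i)) i :=
      hsc_of_mk _ _ (hc (Quot.mk σ.SameCycle i))
    obtain ⟨u, hu⟩ := isConj_iff.mp (part1 _ _ hsc)
    rw [← hu]
    exact Subgroup.normalClosure_normal.conj_mem _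
      (Subgroup.subset_normalClosure (Set.mem_range_self _)) u
  · -- abelianization
    haveI : Finite (Quot σ.SameCycle) :=
      Finite.of_surjective (Quot.mk σ.SameCycle) (fun q => Quot.exists_rep q)
    haveI : Fintype (Quot σ.SameCycle) := Fintype.ofFinite _
    set Q := Quot σ.SameCycle with hQdef
    -- the map to the free abelian group
    set s : Fin m → Multiplicative (Q → ℤ) :=
      fun i => Multiplicative.ofAdd (Pi.single (Quot.mk σ.SameCycle i) 1) with hs
    have hQσ : ∀ q : Fin m, Quot.mk σ.SameCycle (σ q) = Quot.mk σ.SameCycle q :=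
      fun q => Quot.sound ((Equiv.Perm.sameCycle_apply_left).mpr
        (Equiv.Perm.SameCycle.refl σ q))
    have hrels : ∀ r ∈ R, FreeGroup.lift s r = 1 := by
      rintro r ⟨q, rfl⟩
      simp only [map_mul, map_inv, map_zpow, FreeGroup.lift_apply_of]
      have hss : s (σ q) = s q := by rw [hs]; simp only [hQσ q]
      have hcancel : ∀ (a b : Multiplicative (Q → ℤ)) (e : ℤ),
          a⁻¹ * b ^ (-e) * a * b ^ e = 1 := by
        intro a b e
        rw [mul_right_comm a⁻¹ (b ^ (-e)) a, inv_mul_cancel, one_mul, zpow_neg,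
          inv_mul_cancel]
      rw [hss]
      exact hcancel _ _ _
    set f : PresentedGroup R →* Multiplicative (Q → ℤ) := PresentedGroup.toGroup hrels with hf
    set f' : Abelianization (PresentedGroup R) →* Multiplicative (Q → ℤ) :=
      Abelianization.lift f with hf'
    set b : Q → Abelianization (PresentedGroup R) :=
      fun x => Abelianization.of (PresentedGroup.of (rels := R) (Quot.out x)) with hb
    set g : Multiplicative (Q → ℤ) →* Abelianization (PresentedGroup R) :=
      MonoidHom.mk' (fun v => ∏ x : Q, b x ^ (Multiplicative.toAdd v x))
        (by
          intro v w
          rw [← Finset.prod_mul_distrib]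
          refine Finset.prod_congr rfl fun x _ => ?_
          rw [← zpow_add]
          rfl) with hg
    have hfb : ∀ x : Q, f' (b x) = Multiplicative.ofAdd (Pi.single x (1 : ℤ)) := by
      intro x
      simp only [hf', hb, Abelianization.lift_apply_of, hf, PresentedGroup.toGroup.of, hs]
      exact congrArg (fun y => Multiplicative.ofAdd (Pi.single y (1 : ℤ))) (Quot.out_eq x)
    have hgf : ∀ i : Fin m,
        g (Multiplicative.ofAdd (Pi.single (Quot.mk σ.SameCycle i) (1 : ℤ))) =
          Abelianization.of (PresentedGroup.of (rels := R) i) := by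
      intro i
      have h0 : g (Multiplicative.ofAdd (Pi.single (Quot.mk σ.SameCycle i) (1 : ℤ))) =
          ∏ x : Q, b x ^ ((Pi.single (Quot.mk σ.SameCycle i) (1 : ℤ) : Q → ℤ) x) := rfl
      rw [h0, Finset.prod_eq_single (Quot.mk σ.SameCycle i)
        (fun x _ hx => by rw [Pi.single_eq_of_ne hx, zpow_zero])
        (fun h => absurd (Finset.mem_univ _) h)]
      rw [Pi.single_eq_same, zpow_one, hb]
      exact habconj _ _ (part1 _ _ (hsc_of_mk _ _ (Quot.out_eq _)))
    -- g ∘ f' = id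
    have hgfid : g.comp f' = MonoidHom.id _ := by
      ext i
      simp only [MonoidHom.comp_apply, MonoidHom.id_apply, hf', Abelianization.lift_apply_of,
        hf, PresentedGroup.toGroup.of, hs]
      exact hgf i
    -- f' ∘ g = id
    have hfgid : f'.comp g = MonoidHom.id _ := by
      refine MonoidHom.ext fun v => ?_
      have h1 : f' (g v) = ∏ x : Q, (f' (b x)) ^ (Multiplicative.toAdd v x) := by
        rw [hg]
        simp [map_prod, map_zpow]
      rw [MonoidHom.comp_apply, MonoidHom.id_apply, h1]
      have h2 : ∀ x : Q, (f' (b x)) ^ (Multiplicative.toAdd v x) =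
          Multiplicative.ofAdd (Pi.single x (Multiplicative.toAdd v x)) := by
        intro x
        rw [hfb x, ← ofAdd_zsmul]
        congr 1
        ext y
        by_cases h : y = x
        · subst h; simp
        · simp [Pi.single_eq_of_ne h]
      simp only [h2]
      rw [← ofAdd_sum]
      rw [Finset.univ_sum_single (Multiplicative.toAdd v)]
      rfl
    -- assemble
    have e1 : Abelianization (PresentedGroup R) ≃* Multiplicative (Q → ℤ) :=
      MonoidHom.toMulEquiv f' g hgfid hfgid
    have e2 : Q ≃ Fin k := Finite.equivFinOfCardEq hk
    have e3 : (Q → ℤ) ≃+ (Fin k → ℤ) := AddEquiv.arrowCongr e2 (AddEquiv.refl ℤ)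
    exact ⟨e1.trans (AddEquiv.toMultiplicative e3)⟩
end

section
/- Let R be a set of relators in FreeGroup (Fin n) containing the relator r = (FreeGroup.of i)⁻¹ * (u * v)⁻¹ * (FreeGroup.of j) * (u * v), for indices i, j : Fin n and words u, v : FreeGroup (Fin n). Form the free group on Fin n ⊕ Unit (adding one new generator m), and let R' be the set of relators obtained from R \ {r} (with each old generator mapped to itself under the canonical embedding FreeGroup (Fin n) → FreeGroup (Fin n ⊕ Unit)) together with the two new relators (FreeGroup.of i)⁻¹ * v⁻¹ * m * v and m⁻¹ * u⁻¹ * (FreeGroup.of j) * u, where m denotes the new generator. Then PresentedGroup R and PresentedGroup R' are isomorphic. -/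
private lemma mk_rel {α : Type*} {rels : Set (FreeGroup α)} {r : FreeGroup α} (h : r ∈ rels) :
    PresentedGroup.mk rels r = 1 :=
  (QuotientGroup.eq_one_iff r).mpr (Subgroup.subset_normalClosure h)

private lemma lift_map {α β G : Type*} [Group G] (g : α → β) (f : β → G) (w : FreeGroup α) :
    FreeGroup.lift f (FreeGroup.map g w) = FreeGroup.lift (f ∘ g) w := by
  exact FreeGroup.lift_unique ((FreeGroup.lift f).comp (FreeGroup.map g)) (fun x => by simp)

theorem generator_adding_presentation
    (n : ℕ) (R : Set (FreeGroup (Fin n))) (i j : Fin n)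
    (u v : FreeGroup (Fin n))
    (hr : (FreeGroup.of i)⁻¹ * (u * v)⁻¹ * FreeGroup.of j * (u * v) ∈ R) :
    Nonempty (PresentedGroup R ≃*
      PresentedGroup
        ((FreeGroup.map (Sum.inl : Fin n → Fin n ⊕ Unit)) ''
            (R \ {(FreeGroup.of i)⁻¹ * (u * v)⁻¹ * FreeGroup.of j * (u * v)}) ∪
          {(FreeGroup.of (Sum.inl i))⁻¹ * (FreeGroup.map Sum.inl v)⁻¹ *
              FreeGroup.of (Sum.inr ()) * FreeGroup.map Sum.inl v,
            (FreeGroup.of (Sum.inr ()))⁻¹ * (FreeGroup.map Sum.inl u)⁻¹ *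
              FreeGroup.of (Sum.inl j) * FreeGroup.map Sum.inl u})) := by
  set r : FreeGroup (Fin n) :=
    (FreeGroup.of i)⁻¹ * (u * v)⁻¹ * FreeGroup.of j * (u * v) with hrdef
  set R' : Set (FreeGroup (Fin n ⊕ Unit)) :=
    ((FreeGroup.map (Sum.inl : Fin n → Fin n ⊕ Unit)) '' (R \ {r}) ∪
      {(FreeGroup.of (Sum.inl i))⁻¹ * (FreeGroup.map Sum.inl v)⁻¹ *
          FreeGroup.of (Sum.inr ()) * FreeGroup.map Sum.inl v,
        (FreeGroup.of (Sum.inr ()))⁻¹ * (FreeGroup.map Sum.inl u)⁻¹ *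
          FreeGroup.of (Sum.inl j) * FreeGroup.map Sum.inl u}) with hR'def
  -- relators in the new group
  have hrel1 : PresentedGroup.mk R'
      ((FreeGroup.of (Sum.inl i))⁻¹ * (FreeGroup.map Sum.inl v)⁻¹ *
        FreeGroup.of (Sum.inr ()) * FreeGroup.map Sum.inl v) = 1 :=
    mk_rel (by right; left; rfl)
  have hrel2 : PresentedGroup.mk R'
      ((FreeGroup.of (Sum.inr ()))⁻¹ * (FreeGroup.map Sum.inl u)⁻¹ *
        FreeGroup.of (Sum.inl j) * FreeGroup.map Sum.inl u) = 1 :=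
    mk_rel (by right; right; rfl)
  -- abbreviations in the new group
  set A : PresentedGroup R' := PresentedGroup.mk R' (FreeGroup.of (Sum.inl i)) with hA
  set B : PresentedGroup R' := PresentedGroup.mk R' (FreeGroup.of (Sum.inl j)) with hB
  set M : PresentedGroup R' := PresentedGroup.mk R' (FreeGroup.of (Sum.inr ())) with hM
  set U : PresentedGroup R' := PresentedGroup.mk R' (FreeGroup.map Sum.inl u) with hU
  set V : PresentedGroup R' := PresentedGroup.mk R' (FreeGroup.map Sum.inl v) with hV
  have h1 : A⁻¹ * V⁻¹ * M * V = 1 := by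
    rw [hA, hV, hM]; simpa using hrel1
  have h2 : M⁻¹ * U⁻¹ * B * U = 1 := by
    rw [hB, hU, hM]; simpa using hrel2
  -- map forward : old presented group to new one
  have hψ : ∀ s ∈ R,
      FreeGroup.lift (fun k => PresentedGroup.mk R' (FreeGroup.of (Sum.inl k))) s = 1 := by
    intro s hs
    have key : ∀ w : FreeGroup (Fin n),
        FreeGroup.lift (fun k => PresentedGroup.mk R' (FreeGroup.of (Sum.inl k))) w =
          PresentedGroup.mk R' (FreeGroup.map Sum.inl w) := by
      intro w
      exact (FreeGroup.lift_unique ((PresentedGroup.mk R').comp (FreeGroup.map Sum.inl))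
        (fun x => by simp)).symm
    rw [key]
    by_cases hsr : s = r
    · subst hsr
      have : PresentedGroup.mk R' (FreeGroup.map Sum.inl r) =
          A⁻¹ * (U * V)⁻¹ * B * (U * V) := by
        rw [hrdef]; simp [hA, hB, hU, hV, mul_assoc]
      rw [this]
      calc A⁻¹ * (U * V)⁻¹ * B * (U * V)
          = (A⁻¹ * V⁻¹ * M * V) * (V⁻¹ * (M⁻¹ * U⁻¹ * B * U) * V) := by group
        _ = 1 := by rw [h1, h2]; group
    · exact mk_rel (by left; exact ⟨s, ⟨hs, hsr⟩, rfl⟩)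
  let ψ : PresentedGroup R →* PresentedGroup R' := PresentedGroup.toGroup hψ
  -- map backward
  let f' : Fin n ⊕ Unit → PresentedGroup R := fun x =>
    Sum.casesOn x (fun k => PresentedGroup.mk R (FreeGroup.of k))
      (fun _ => PresentedGroup.mk R (v * FreeGroup.of i * v⁻¹))
  have keyf' : ∀ w : FreeGroup (Fin n),
      FreeGroup.lift f' (FreeGroup.map Sum.inl w) = PresentedGroup.mk R w := by
    intro w
    rw [lift_map]
    exact (FreeGroup.lift_unique (PresentedGroup.mk R) fun x => rfl).symm
  have hrG : PresentedGroup.mk R r = 1 := mk_rel hr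
  have hφ : ∀ s ∈ R', FreeGroup.lift f' s = 1 := by
    intro s hs
    rcases hs with ⟨w, ⟨hw, _⟩, rfl⟩ | hs
    · rw [keyf']; exact mk_rel hw
    · set A' : PresentedGroup R := PresentedGroup.mk R (FreeGroup.of i) with hA'
      set B' : PresentedGroup R := PresentedGroup.mk R (FreeGroup.of j) with hB'
      set U' : PresentedGroup R := PresentedGroup.mk R u with hU'
      set V' : PresentedGroup R := PresentedGroup.mk R v with hV'
      have hrG' : A'⁻¹ * (U' * V')⁻¹ * B' * (U' * V') = 1 := by
        rw [hA', hB', hU', hV']; simpa [hrdef, mul_assoc] using hrG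
      rcases hs with hs | hs
      · rw [hs]
        have e1 : FreeGroup.lift f' (FreeGroup.map Sum.inl v) = V' := keyf' v
        have e2 : FreeGroup.lift f' (FreeGroup.of (Sum.inl i)) = A' := by simp [f', hA']
        have e3 : FreeGroup.lift f' (FreeGroup.of (Sum.inr ())) = V' * A' * V'⁻¹ := by
          simp only [FreeGroup.lift_apply_of]
          show PresentedGroup.mk R (v * FreeGroup.of i * v⁻¹) = _
          simp [hV', hA']
        simp only [map_mul, map_inv, e1, e2, e3]
        group
      · simp only [Set.mem_singleton_iff] at hs
        rw [hs]
        have e1 : FreeGroup.lift f' (FreeGroup.map Sum.inl u) = U' := keyf' u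
        have e2 : FreeGroup.lift f' (FreeGroup.of (Sum.inl j)) = B' := by simp [f', hB']
        have e3 : FreeGroup.lift f' (FreeGroup.of (Sum.inr ())) = V' * A' * V'⁻¹ := by
          simp only [FreeGroup.lift_apply_of]
          show PresentedGroup.mk R (v * FreeGroup.of i * v⁻¹) = _
          simp [hV', hA']
        simp only [map_mul, map_inv, e1, e2, e3]
        calc (V' * A' * V'⁻¹)⁻¹ * U'⁻¹ * B' * U'
            = V' * (A'⁻¹ * (U' * V')⁻¹ * B' * (U' * V')) * V'⁻¹ := by group
          _ = 1 := by rw [hrG']; group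
  let φ : PresentedGroup R' →* PresentedGroup R := PresentedGroup.toGroup hφ
  -- the two maps are inverse
  have hφψ : φ.comp ψ = MonoidHom.id _ := by
    ext k
    simp [φ, ψ, PresentedGroup.toGroup.of, f']
    rfl
  have hψφ : ψ.comp φ = MonoidHom.id _ := by
    ext x
    rcases x with k | ⟨⟩
    · simp [φ, ψ, PresentedGroup.toGroup.of, f']
      rfl
    · have lhs : ψ (φ (PresentedGroup.of (Sum.inr ()))) =
          V * A * V⁻¹ := by
        have : φ (PresentedGroup.of (Sum.inr ())) =
            PresentedGroup.mk R (v * FreeGroup.of i * v⁻¹) := by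
          simp [φ, PresentedGroup.toGroup.of, f']
        rw [this]
        have : ψ (PresentedGroup.mk R (v * FreeGroup.of i * v⁻¹)) =
            PresentedGroup.mk R' (FreeGroup.map Sum.inl (v * FreeGroup.of i * v⁻¹)) := by
          show FreeGroup.lift _ _ = _
          exact (FreeGroup.lift_unique ((PresentedGroup.mk R').comp (FreeGroup.map Sum.inl))
            (fun x => by simp)).symm
        rw [this]
        simp [hV, hA]
      have hMeq : V * A * V⁻¹ = M := by
        calc V * A * V⁻¹ = M * (V * (A⁻¹ * V⁻¹ * M * V) * V⁻¹)⁻¹ := by group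
          _ = M := by rw [h1]; group
      show ψ (φ (PresentedGroup.of (Sum.inr ()))) = PresentedGroup.of (Sum.inr ())
      rw [lhs, hMeq]
      rfl
  exact ⟨MonoidHom.toMulEquiv ψ φ hφψ hψφ⟩
end
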